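/- arXiv:2310.13999 — 6 statements merged into one kernel-verified Lean document; each statement's English description precedes it below -/
import Mathlib

section
/- Let a₁,…,a_{2s}, d₁,…,d_{t−1} be real numbers with d_i > 0 such that a₁ + a_{s+1} = a₂ + a_{s+2} = ⋯ = a_s + a_{2s}. Let A' = {a_i + ε₁d₁ + ⋯ + ε_{t−1}d_{t−1} : 1 ≤ i ≤ 2s, ε_j ∈ {0,1}}. Then |A' − A'| ≤ 3^{t−1}·s² + (3^{t−1} − 1)/2. -/
/-- The set of distinct positive differences of a finite set `S ⊆ ℝ`:
`S − S = {|a − b| : a, b ∈ S, a ≠ b}`. -/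
noncomputable def diffSet (S : Finset ℝ) : Finset ℝ :=
  ((S ×ˢ S).filter (fun p => p.1 ≠ p.2)).image (fun p => |p.1 - p.2|)

section aux

variable {n : ℕ} (d : Fin n → ℝ)

/-- All signed combinations `∑ λⱼ dⱼ`, `λⱼ ∈ {-1,0,1}`. -/
noncomputable def Vset : Finset ℝ :=
  Finset.image (fun l : Fin n → Fin 3 => ∑ j, (((l j : ℕ) : ℝ) - 1) * d j) Finset.univ

lemma Vset_card : (Vset d).card ≤ 3 ^ n := by
  refine le_trans Finset.card_image_le ?_
  simp [Finset.card_univ]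

lemma zero_mem_Vset : (0:ℝ) ∈ Vset d := by
  refine Finset.mem_image.2 ⟨fun _ => 1, Finset.mem_univ _, ?_⟩
  simp

lemma neg_mem_Vset {v : ℝ} (h : v ∈ Vset d) : -v ∈ Vset d := by
  obtain ⟨l, -, rfl⟩ := Finset.mem_image.1 h
  refine Finset.mem_image.2 ⟨fun j => ⟨2 - (l j : ℕ), by omega⟩, Finset.mem_univ _, ?_⟩
  rw [← Finset.sum_neg_distrib]
  refine Finset.sum_congr rfl fun j _ => ?_
  have h2 : (l j : ℕ) ≤ 2 := Nat.lt_succ_iff.mp (l j).isLt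
  have : (((2 - (l j : ℕ) : ℕ)) : ℝ) = 2 - ((l j : ℕ) : ℝ) := by
    rw [Nat.cast_sub h2]; norm_num
  simp only [this]
  ring

lemma diff_mem_Vset (e e' : Fin n → Bool) :
    (∑ j, (if e j then d j else 0)) - (∑ j, (if e' j then d j else 0)) ∈ Vset d := by
  refine Finset.mem_image.2 ⟨fun j => if e j then (if e' j then 1 else 2) else
    (if e' j then 0 else 1), Finset.mem_univ _, ?_⟩
  rw [← Finset.sum_sub_distrib]
  refine Finset.sum_congr rfl fun j _ => ?_
  cases he : e j <;> cases he' : e' j <;> simp [he, he'] <;> norm_num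

end aux

/-- Let `a 0, …, a (2s−1)` and positive `d 0, …, d (t−2)` be reals with
`a i + a (s+i) = a 0 + a s` for all `i < s` (all `s` pairs have equal sums), and let
`A' = {a i + ε₁ d₁ + ⋯ + ε_{t−1} d_{t−1} : i < 2s, ε_j ∈ {0,1}}`. Then
`|A' − A'| ≤ 3^{t−1} s² + (3^{t−1} − 1)/2`. -/
theorem cube_few_diffs (s t : ℕ) (hs : 0 < s) (ht : 0 < t)
    (a : ℕ → ℝ) (d : Fin (t - 1) → ℝ) (hd : ∀ j, 0 < d j)
    (hsum : ∀ i < s, a i + a (s + i) = a 0 + a s) :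
    (diffSet (((Finset.range (2 * s)) ×ˢ (Finset.univ : Finset (Fin (t - 1) → Bool))).image
        (fun p => a p.1 + ∑ j, (if p.2 j then d j else 0)))).card
      ≤ 3 ^ (t - 1) * s ^ 2 + (3 ^ (t - 1) - 1) / 2 := by
  classical
  set C : ℝ := a 0 + a s with hC
  set V : Finset ℝ := Vset d with hVdef
  -- the pairing identity
  have ha2 : ∀ i < s, a (s + i) = C - a i := by
    intro i hi
    have := hsum i hi
    linarith
  -- positive difference candidates
  set S := (Finset.range s) ×ˢ (Finset.range s) with hSdef
  set D1 := (S.filter (fun p => p.1 < p.2)).image (fun p => |a p.1 - a p.2|) with hD1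
  set D2 := (S.filter (fun p => ¬ p.1 < p.2)).image (fun p => |a p.1 + a p.2 - C|) with hD2
  set Dp := D1 ∪ D2 with hDp
  have hDcard : Dp.card ≤ s ^ 2 := by
    calc Dp.card ≤ D1.card + D2.card := Finset.card_union_le _ _
    _ ≤ (S.filter (fun p => p.1 < p.2)).card + (S.filter (fun p => ¬ p.1 < p.2)).card :=
        add_le_add Finset.card_image_le Finset.card_image_le
    _ = S.card := Finset.card_filter_add_card_filter_not _
    _ = s ^ 2 := by simp [hSdef, sq]
  -- small differences are in D1, pair sums in D2
  have hmemD1 : ∀ i k, i < s → k < s → a i ≠ a k → |a i - a k| ∈ Dp := by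
    intro i k hi hk hne
    rcases lt_trichotomy i k with h | h | h
    · exact Finset.mem_union_left _ <| Finset.mem_image.2 ⟨(i, k), by
        simp [hSdef, hi, hk, h], rfl⟩
    · exact absurd (h ▸ rfl) hne
    · rw [abs_sub_comm]
      exact Finset.mem_union_left _ <| Finset.mem_image.2 ⟨(k, i), by
        simp [hSdef, hi, hk, h], rfl⟩
  have hmemD2 : ∀ i k, i < s → k < s → |a i + a k - C| ∈ Dp := by
    intro i k hi hk
    rcases le_or_gt k i with h | h
    · exact Finset.mem_union_right _ <| Finset.mem_image.2 ⟨(i, k), by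
        simp [hSdef, hi, hk, Nat.not_lt, h], rfl⟩
    · have : a i + a k = a k + a i := by ring
      rw [this]
      exact Finset.mem_union_right _ <| Finset.mem_image.2 ⟨(k, i), by
        simp [hSdef, hi, hk, Nat.not_lt, h.le], rfl⟩
  have hDmem : ∀ i k, i < 2 * s → k < 2 * s → a i ≠ a k → |a i - a k| ∈ Dp := by
    intro i k hi hk hne
    by_cases hi' : i < s <;> by_cases hk' : k < s
    · exact hmemD1 i k hi' hk' hne
    · -- i < s, k ≥ s
      have hk2 : k - s < s := by omega
      have hkk : k = s + (k - s) := by omega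
      have hak : a k = C - a (k - s) := by
        have h' := ha2 _ hk2; rwa [← hkk] at h'
      have : |a i - a k| = |a i + a (k - s) - C| := by rw [hak]; ring_nf
      rw [this]
      exact hmemD2 i (k - s) hi' hk2
    · -- i ≥ s, k < s
      have hi2 : i - s < s := by omega
      have hii : i = s + (i - s) := by omega
      have hai : a i = C - a (i - s) := by
        have h' := ha2 _ hi2; rwa [← hii] at h'
      have : |a i - a k| = |a k + a (i - s) - C| := by rw [hai]; rw [abs_sub_comm]; ring_nf
      rw [this]
      exact hmemD2 k (i - s) hk' hi2
    · -- both ≥ s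
      have hi2 : i - s < s := by omega
      have hk2 : k - s < s := by omega
      have hai : a i = C - a (i - s) := by
        have h' := ha2 _ hi2; rwa [← (show i = s + (i - s) by omega)] at h'
      have hak : a k = C - a (k - s) := by
        have h' := ha2 _ hk2; rwa [← (show k = s + (k - s) by omega)] at h'
      have hne' : a (k - s) ≠ a (i - s) := by
        intro h; apply hne; rw [hai, hak, h]
      have : |a i - a k| = |a (k - s) - a (i - s)| := by rw [hai, hak]; ring_nf
      rw [this]
      exact hmemD1 _ _ hk2 hi2 hne'
  -- target sets
  set T1 := (Dp ×ˢ V).image (fun p : ℝ × ℝ => |p.1 + p.2|) with hT1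
  set Vp := V.filter (fun v => 0 < v) with hVp
  -- the big subset step
  have hsub : (diffSet (((Finset.range (2 * s)) ×ˢ (Finset.univ : Finset (Fin (t - 1) → Bool))).image
      (fun p => a p.1 + ∑ j, (if p.2 j then d j else 0)))) ⊆ T1 ∪ Vp := by
    intro x hx
    obtain ⟨⟨u, w⟩, huw, rfl⟩ := Finset.mem_image.1 hx
    rw [Finset.mem_filter, Finset.mem_product] at huw
    obtain ⟨⟨hu, hw⟩, hne⟩ := huw
    obtain ⟨⟨i, e⟩, hie, rfl⟩ := Finset.mem_image.1 hu
    obtain ⟨⟨k, e'⟩, hke, rfl⟩ := Finset.mem_image.1 hw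
    rw [Finset.mem_product, Finset.mem_range] at hie hke
    simp only at hne ⊢
    set v : ℝ := (∑ j, (if e j then d j else 0)) - (∑ j, (if e' j then d j else 0)) with hv
    have hvV : v ∈ V := diff_mem_Vset d e e'
    have key : (a i + ∑ j, (if e j then d j else 0)) - (a k + ∑ j, (if e' j then d j else 0))
        = (a i - a k) + v := by rw [hv]; ring
    by_cases hak : a i = a k
    · -- pure cube difference
      have hv0 : v ≠ 0 := by
        intro h0
        apply hne
        have := key
        rw [h0, hak] at this
        linarith [this]
      refine Finset.mem_union_right _ ?_
      rw [key, hak, sub_self, zero_add]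
      rcases lt_or_gt_of_ne hv0 with h | h
      · rw [abs_of_neg h]
        exact Finset.mem_filter.2 ⟨neg_mem_Vset d hvV, by linarith⟩
      · rw [abs_of_pos h]
        exact Finset.mem_filter.2 ⟨hvV, h⟩
    · refine Finset.mem_union_left _ ?_
      have hD : |a i - a k| ∈ Dp := hDmem i k hie.1 hke.1 hak
      rw [key]
      rcases lt_or_gt_of_ne (sub_ne_zero.2 hak) with h | h
      · refine Finset.mem_image.2 ⟨(|a i - a k|, -v), ?_, ?_⟩
        · exact Finset.mem_product.2 ⟨hD, neg_mem_Vset d hvV⟩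
        · simp only
          rw [abs_of_neg h, ← abs_neg]
          ring_nf
      · refine Finset.mem_image.2 ⟨(|a i - a k|, v), ?_, ?_⟩
        · exact Finset.mem_product.2 ⟨hD, hvV⟩
        · simp only
          rw [abs_of_pos h]
  -- cardinality of Vp
  have hVpcard : Vp.card ≤ (3 ^ (t - 1) - 1) / 2 := by
    set Vn := V.filter (fun v => v < 0) with hVn
    have hbij : Vp.card = Vn.card := by
      refine Finset.card_bij (fun v _ => -v) ?_ ?_ ?_
      · intro v hv
        rw [Finset.mem_filter] at hv
        show -v ∈ Vn
        rw [Finset.mem_filter]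
        exact ⟨neg_mem_Vset d hv.1, by linarith [hv.2]⟩
      · intro v hv w hw h
        have h' : -v = -w := h
        linarith
      · intro v hv
        rw [Finset.mem_filter] at hv
        refine ⟨-v, Finset.mem_filter.2 ⟨neg_mem_Vset d hv.1, by linarith [hv.2]⟩, by ring⟩
    have hdisj : Disjoint Vp Vn := by
      rw [Finset.disjoint_filter]
      intro v _ h1
      linarith
    have hsubV : Vp ∪ Vn ⊆ V.erase 0 := by
      intro v hv
      rcases Finset.mem_union.1 hv with h | h <;> rw [Finset.mem_filter] at h <;>
        exact Finset.mem_erase.2 ⟨by intro h0; rw [h0] at h; linarith [h.2], h.1⟩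
    have h1 : Vp.card + Vn.card ≤ (V.erase 0).card := by
      rw [← Finset.card_union_of_disjoint hdisj]
      exact Finset.card_le_card hsubV
    have hVcard : V.card ≤ 3 ^ (t - 1) := Vset_card d
    have h2 : (V.erase 0).card = V.card - 1 :=
      Finset.card_erase_of_mem (zero_mem_Vset d)
    have h3 : 1 ≤ 3 ^ (t - 1) := Nat.one_le_pow _ _ (by norm_num)
    omega
  have hVcard : V.card ≤ 3 ^ (t - 1) := Vset_card d
  calc (diffSet _).card ≤ (T1 ∪ Vp).card := Finset.card_le_card hsub
    _ ≤ T1.card + Vp.card := Finset.card_union_le _ _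
    _ ≤ Dp.card * V.card + (3 ^ (t - 1) - 1) / 2 := by
        refine add_le_add ?_ hVpcard
        refine le_trans Finset.card_image_le ?_
        rw [Finset.card_product]
    _ ≤ s ^ 2 * 3 ^ (t - 1) + (3 ^ (t - 1) - 1) / 2 :=
        add_le_add_left (Nat.mul_le_mul hDcard hVcard) _
    _ = 3 ^ (t - 1) * s ^ 2 + (3 ^ (t - 1) - 1) / 2 := by rw [Nat.mul_comm]
end

section
/- Let a₁,…,a_{2s} be real numbers (not necessarily distinct) satisfying a₁ + a_{s+1} = a₂ + a_{s+2} = ⋯ = a_s + a_{2s}. Then the set {|a_i − a_j| : 1 ≤ i < j ≤ 2s, a_i ≠ a_j} has at most s² elements. -/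
/-- Let `a 0, …, a (2s−1)` be reals (not necessarily distinct) with
`a i + a (s+i) = a 0 + a s` for all `i < s` (the `s` pairs all have equal sums).
Then the set `{|a i − a j| : i, j < 2s, a i ≠ a j}` has at most `s²` elements. -/
theorem equal_sums_few_diffs (s : ℕ) (hs : 1 ≤ s) (a : ℕ → ℝ)
    (hsum : ∀ i < s, a i + a (s + i) = a 0 + a s) :
    ((((Finset.range (2 * s)) ×ˢ (Finset.range (2 * s))).filter
        (fun p => a p.1 ≠ a p.2)).image (fun p => |a p.1 - a p.2|)).card ≤ s ^ 2 := by
  classical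
  set T := (Finset.range s) ×ˢ (Finset.range s) with hT
  set A := T.filter (fun p => p.1 < p.2) with hA
  set B := T.filter (fun p => p.1 ≤ p.2) with hB
  set S := A ∪ B.image (fun p => (p.1, s + p.2)) with hS
  have key : ∀ i j, i < s → j < s → a i - a (s + j) = a j - a (s + i) := by
    intro i j hi hj
    have h1 := hsum i hi
    have h2 := hsum j hj
    linarith
  have key2 : ∀ i j, i < s → j < s → a (s + i) - a (s + j) = a j - a i := by
    intro i j hi hj
    have h1 := hsum i hi
    have h2 := hsum j hj
    linarith
  have hmemA : ∀ i j, i < j → j < s → (i, j) ∈ S := by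
    intro i j hij hj
    simp only [hS, Finset.mem_union, hA, Finset.mem_filter, hT, Finset.mem_product,
      Finset.mem_range]
    exact Or.inl ⟨⟨lt_trans hij hj, hj⟩, hij⟩
  have hmemB : ∀ i j, i ≤ j → j < s → (i, s + j) ∈ S := by
    intro i j hij hj
    simp only [hS, Finset.mem_union, Finset.mem_image, hB, Finset.mem_filter, hT,
      Finset.mem_product, Finset.mem_range]
    exact Or.inr ⟨(i, j), ⟨⟨lt_of_le_of_lt hij hj, hj⟩, hij⟩, rfl⟩
  have claim : ∀ i j, i < 2 * s → j < 2 * s → a i ≠ a j →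
      ∃ p ∈ S, |a p.1 - a p.2| = |a i - a j| := by
    intro i j hi hj hne
    by_cases his : i < s
    · by_cases hjs : j < s
      · rcases lt_trichotomy i j with h | h | h
        · exact ⟨(i, j), hmemA i j h hjs, rfl⟩
        · exact absurd (congrArg a h) hne
        · exact ⟨(j, i), hmemA j i h his, abs_sub_comm _ _⟩
      · have hj' : j - s < s := by omega
        have hjj : j = s + (j - s) := by omega
        by_cases hle : i ≤ j - s
        · exact ⟨(i, s + (j - s)), hmemB i (j - s) hle hj', by rw [← hjj]⟩
        · refine ⟨(j - s, s + i), hmemB (j - s) i (by omega) his, ?_⟩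
          simp only
          rw [← key i (j - s) his hj', ← hjj]
    · by_cases hjs : j < s
      · have hi' : i - s < s := by omega
        have hii : i = s + (i - s) := by omega
        by_cases hle : j ≤ i - s
        · refine ⟨(j, s + (i - s)), hmemB j (i - s) hle hi', ?_⟩
          rw [← hii]
          exact abs_sub_comm _ _
        · refine ⟨(i - s, s + j), hmemB (i - s) j (by omega) hjs, ?_⟩
          simp only
          rw [← key j (i - s) hjs hi', ← hii]
          exact abs_sub_comm _ _
      · have hi' : i - s < s := by omega
        have hj' : j - s < s := by omega
        have hii : i = s + (i - s) := by omega
        have hjj : j = s + (j - s) := by omega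
        have hval : a i - a j = a (j - s) - a (i - s) := by
          have h := key2 (i - s) (j - s) hi' hj'
          rw [← hii, ← hjj] at h
          exact h
        rcases lt_trichotomy (i - s) (j - s) with h | h | h
        · refine ⟨(i - s, j - s), hmemA _ _ h hj', ?_⟩
          simp only
          rw [hval]
          exact abs_sub_comm _ _
        · exfalso; apply hne; rw [hii, hjj, h]
        · exact ⟨(j - s, i - s), hmemA _ _ h hi', by simp only; rw [hval]⟩
  have hsub : (((Finset.range (2 * s)) ×ˢ (Finset.range (2 * s))).filter
      (fun p => a p.1 ≠ a p.2)).image (fun p => |a p.1 - a p.2|)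
      ⊆ S.image (fun p => |a p.1 - a p.2|) := by
    intro v hv
    simp only [Finset.mem_image, Finset.mem_filter, Finset.mem_product, Finset.mem_range] at hv ⊢
    obtain ⟨⟨i, j⟩, ⟨⟨hi, hj⟩, hne⟩, rfl⟩ := hv
    obtain ⟨p, hp, hval⟩ := claim i j hi hj hne
    exact ⟨p, hp, hval⟩
  have hcardS : S.card ≤ s ^ 2 := by
    have h1 : S.card ≤ A.card + B.card := by
      calc S.card ≤ A.card + (B.image (fun p => (p.1, s + p.2))).card :=
            Finset.card_union_le _ _
        _ ≤ A.card + B.card := by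
            exact Nat.add_le_add_left (Finset.card_image_le) _
    have hswap : B.card = (T.filter (fun p => ¬ p.1 < p.2)).card := by
      apply Finset.card_nbij' Prod.swap Prod.swap
      · intro p hp
        simp only [Finset.mem_coe, hB, hT, Finset.mem_filter, Finset.mem_product, Finset.mem_range] at hp ⊢
        exact ⟨⟨hp.1.2, hp.1.1⟩, not_lt.mpr hp.2⟩
      · intro p hp
        simp only [Finset.mem_coe, hB, hT, Finset.mem_filter, Finset.mem_product, Finset.mem_range] at hp ⊢
        exact ⟨⟨hp.1.2, hp.1.1⟩, not_lt.mp hp.2⟩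
      · intro p _; simp
      · intro p _; simp
    have hpart : A.card + (T.filter (fun p => ¬ p.1 < p.2)).card = T.card := by
      rw [hA]
      exact Finset.card_filter_add_card_filter_not (fun p : ℕ × ℕ => p.1 < p.2)
    have hTcard : T.card = s ^ 2 := by
      simp [hT, Finset.card_product, sq]
    omega
  calc ((((Finset.range (2 * s)) ×ˢ (Finset.range (2 * s))).filter
        (fun p => a p.1 ≠ a p.2)).image (fun p => |a p.1 - a p.2|)).card
      ≤ (S.image (fun p => |a p.1 - a p.2|)).card := Finset.card_le_card hsub
    _ ≤ S.card := Finset.card_image_le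
    _ ≤ s ^ 2 := hcardS
end

section
/- For any finite set A ⊆ ℝ with |A| = n ≥ 2 and any s ≥ 1, if the number of distinct signed differences #{a − b : (a,b) ∈ A²} is at most n²/(3s), then there exist 2s distinct elements a₁,…,a_{2s} ∈ A with a₁ + a_{s+1} = a₂ + a_{s+2} = ⋯ = a_s + a_{2s}. -/
open Finset

/-- Fiberwise square sum identity: the sum of squared fiber sizes equals the number of
pairs in the same fiber. -/
lemma fiber_sq_sum {α β : Type*} [DecidableEq α] [DecidableEq β] (Q : Finset α) (f : α → β) :
    ∑ c ∈ Q.image f, ((Q.filter (fun p => f p = c)).card) ^ 2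
      = ((Q ×ˢ Q).filter (fun z => f z.1 = f z.2)).card := by
  have h1 : ((Q ×ˢ Q).filter (fun z => f z.1 = f z.2)).card
      = ∑ p ∈ Q, (Q.filter (fun q => f p = f q)).card := by
    rw [card_filter, Finset.sum_product]
    refine Finset.sum_congr rfl fun p _ => ?_
    rw [card_filter]
  rw [h1, ← Finset.sum_fiberwise_of_maps_to (fun p hp => Finset.mem_image_of_mem f hp)
    (fun p => (Q.filter (fun q => f p = f q)).card)]
  refine Finset.sum_congr rfl fun c hc => ?_
  have : ∀ p ∈ Q.filter (fun p => f p = c),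
      (Q.filter (fun q => f p = f q)).card = (Q.filter (fun q => f q = c)).card := by
    intro p hp
    rw [Finset.mem_filter] at hp
    congr 1
    ext q
    simp [hp.2, eq_comm]
  rw [Finset.sum_congr rfl this, Finset.sum_const, smul_eq_mul, sq]

/-- Energy identity: number of quadruples with equal differences equals number with
equal sums. -/
lemma energy_swap (A : Finset ℝ) :
    (((A ×ˢ A) ×ˢ (A ×ˢ A)).filter (fun z => z.1.1 - z.1.2 = z.2.1 - z.2.2)).card
      = (((A ×ˢ A) ×ˢ (A ×ˢ A)).filter (fun z => z.1.1 + z.1.2 = z.2.1 + z.2.2)).card := by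
  apply Finset.card_nbij' (fun z => ((z.1.1, z.2.2), (z.2.1, z.1.2)))
    (fun z => ((z.1.1, z.2.2), (z.2.1, z.1.2)))
  · intro z hz
    simp only [Finset.mem_coe, Finset.mem_filter, Finset.mem_product] at hz ⊢
    obtain ⟨⟨⟨h1, h2⟩, h3, h4⟩, h5⟩ := hz
    refine ⟨⟨⟨h1, h4⟩, h3, h2⟩, by linarith⟩
  · intro z hz
    simp only [Finset.mem_coe, Finset.mem_filter, Finset.mem_product] at hz ⊢
    obtain ⟨⟨⟨h1, h2⟩, h3, h4⟩, h5⟩ := hz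
    refine ⟨⟨⟨h1, h4⟩, h3, h2⟩, by linarith⟩
  · intro z _; rfl
  · intro z _; rfl

set_option maxHeartbeats 1000000 in
/-- Base case `t = 1` of the cube-finding lemma: if `A ⊆ ℝ` has `|A| = n ≥ 2` and the
number of distinct signed differences `#{a − b : (a,b) ∈ A²}` is at most `n²/(3s)`,
then there are `2s` distinct elements `a 0, …, a (2s−1)` of `A` with
`a i + a (s+i) = a 0 + a s` for all `i < s`. -/
theorem find_equal_sum_pairs (A : Finset ℝ) (n s : ℕ) (hn : 2 ≤ n) (hs : 1 ≤ s)
    (hA : A.card = n)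
    (h : ((((A ×ˢ A).image (fun p => p.1 - p.2)).card : ℝ)) ≤ (n : ℝ) ^ 2 / (3 * s)) :
    ∃ a : ℕ → ℝ,
      (∀ i < 2 * s, a i ∈ A) ∧
      (∀ i < 2 * s, ∀ j < 2 * s, a i = a j → i = j) ∧
      (∀ i < s, a i + a (s + i) = a 0 + a s) := by
  classical
  set Q := A ×ˢ A with hQ
  set D := Q.image (fun p => p.1 - p.2) with hD
  set S := Q.image (fun p => p.1 + p.2) with hS
  -- fiber counts
  set rd : ℝ → ℕ := fun c => (Q.filter (fun p => p.1 - p.2 = c)).card with hrd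
  set rs : ℝ → ℕ := fun c => (Q.filter (fun p => p.1 + p.2 = c)).card with hrs
  have hQcard : Q.card = n ^ 2 := by rw [hQ, Finset.card_product, hA, sq]
  have hsum_rd : ∑ c ∈ D, rd c = n ^ 2 := by
    rw [← hQcard, hrd]
    exact (Finset.card_eq_sum_card_image (fun p => p.1 - p.2) Q).symm
  have hsum_rs : ∑ c ∈ S, rs c = n ^ 2 := by
    rw [← hQcard, hrs]
    exact (Finset.card_eq_sum_card_image (fun p => p.1 + p.2) Q).symm
  have henergy : ∑ c ∈ D, (rd c) ^ 2 = ∑ c ∈ S, (rs c) ^ 2 := by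
    rw [hrd, hrs]
    rw [fiber_sq_sum Q (fun p => p.1 - p.2), fiber_sq_sum Q (fun p => p.1 + p.2)]
    exact energy_swap A
  -- Cauchy-Schwarz over the differences
  have hCS : ((n : ℝ) ^ 2) ^ 2 ≤ (D.card : ℝ) * ∑ c ∈ D, ((rd c : ℝ)) ^ 2 := by
    have := Finset.sum_mul_sq_le_sq_mul_sq D (fun _ => (1 : ℝ)) (fun c => (rd c : ℝ))
    simp only [one_mul, one_pow, Finset.sum_const, nsmul_eq_mul, smul_eq_mul, mul_one] at this
    calc ((n : ℝ) ^ 2) ^ 2 = (∑ c ∈ D, ((rd c : ℝ))) ^ 2 := by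
          rw [← Nat.cast_sum, hsum_rd]; push_cast; ring
      _ ≤ (D.card : ℝ) * ∑ c ∈ D, ((rd c : ℝ)) ^ 2 := this
  -- there is a sum value with many representations
  have hmax : ∃ c ∈ S, 3 * s ≤ rs c := by
    by_contra hcon
    push_neg at hcon
    have hub : ∀ c ∈ S, (rs c : ℝ) ≤ 3 * s - 1 := by
      intro c hc
      have := hcon c hc
      have : rs c ≤ 3 * s - 1 := by omega
      have := (Nat.cast_le (α := ℝ)).2 this
      push_cast [Nat.cast_sub (by omega : 1 ≤ 3 * s)] at this ⊢
      linarith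
    have hsq : ∑ c ∈ S, ((rs c : ℝ)) ^ 2 ≤ (3 * s - 1) * (n : ℝ) ^ 2 := by
      have : ∑ c ∈ S, ((rs c : ℝ)) ^ 2 ≤ ∑ c ∈ S, (3 * s - 1) * (rs c : ℝ) := by
        refine Finset.sum_le_sum fun c hc => ?_
        have h1 := hub c hc
        have h2 : (0 : ℝ) ≤ (rs c : ℝ) := Nat.cast_nonneg _
        nlinarith
      calc ∑ c ∈ S, ((rs c : ℝ)) ^ 2 ≤ ∑ c ∈ S, (3 * s - 1) * (rs c : ℝ) := this
        _ = (3 * s - 1) * ∑ c ∈ S, (rs c : ℝ) := by rw [Finset.mul_sum]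
        _ = (3 * s - 1) * (n : ℝ) ^ 2 := by
            rw [← Nat.cast_sum, hsum_rs]; push_cast; ring
    have hE : ∑ c ∈ D, ((rd c : ℝ)) ^ 2 = ∑ c ∈ S, ((rs c : ℝ)) ^ 2 := by
      have := henergy
      have := congrArg (fun k : ℕ => (k : ℝ)) henergy
      push_cast at this
      exact this
    have hs1 : (1 : ℝ) ≤ (s : ℝ) := by exact_mod_cast hs
    have hn0 : (0 : ℝ) < (n : ℝ) ^ 2 := by positivity
    have h3s : (0 : ℝ) < 3 * (s : ℝ) := by linarith
    have hDle : (D.card : ℝ) ≤ (n : ℝ) ^ 2 / (3 * s) := h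
    have : ((n : ℝ) ^ 2) ^ 2 ≤ ((n : ℝ) ^ 2 / (3 * s)) * ((3 * s - 1) * (n : ℝ) ^ 2) := by
      calc ((n : ℝ) ^ 2) ^ 2 ≤ (D.card : ℝ) * ∑ c ∈ D, ((rd c : ℝ)) ^ 2 := hCS
        _ = (D.card : ℝ) * ∑ c ∈ S, ((rs c : ℝ)) ^ 2 := by rw [hE]
        _ ≤ ((n : ℝ) ^ 2 / (3 * s)) * ((3 * s - 1) * (n : ℝ) ^ 2) := by
            have hnn : (0 : ℝ) ≤ ∑ c ∈ S, ((rs c : ℝ)) ^ 2 :=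
              Finset.sum_nonneg fun c _ => sq_nonneg _
            have h0 : (0 : ℝ) ≤ 3 * (s : ℝ) - 1 := by linarith
            have h1 : (0 : ℝ) ≤ (3 * s - 1) * (n : ℝ) ^ 2 := mul_nonneg h0 hn0.le
            have h2 : (0 : ℝ) ≤ (n : ℝ) ^ 2 / (3 * s) := le_of_lt (div_pos hn0 h3s)
            exact mul_le_mul hDle hsq hnn h2
    have hlt : ((n : ℝ) ^ 2 / (3 * s)) * ((3 * s - 1) * (n : ℝ) ^ 2) < ((n : ℝ) ^ 2) ^ 2 := by
      have hkey : ((n : ℝ) ^ 2 / (3 * s)) * ((3 * s - 1) * (n : ℝ) ^ 2)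
          = ((n : ℝ) ^ 2) ^ 2 * ((3 * s - 1) / (3 * s)) := by
        field_simp
      rw [hkey]
      have hlt1 : (3 * (s : ℝ) - 1) / (3 * s) < 1 := by
        rw [div_lt_one h3s]
        linarith
      have hpos : (0 : ℝ) < ((n : ℝ) ^ 2) ^ 2 := by positivity
      calc ((n : ℝ) ^ 2) ^ 2 * ((3 * s - 1) / (3 * s)) < ((n : ℝ) ^ 2) ^ 2 * 1 := by
            exact mul_lt_mul_of_pos_left hlt1 hpos
        _ = ((n : ℝ) ^ 2) ^ 2 := mul_one _
    linarith
  obtain ⟨c, hcS, hc3s⟩ := hmax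
  -- pairs summing to c with distinct coordinates
  set P := Q.filter (fun p => p.1 + p.2 = c ∧ p.1 ≠ p.2) with hP
  have hPcard : 2 * s ≤ P.card := by
    have hsplit : rs c ≤ P.card + 1 := by
      have : Q.filter (fun p => p.1 + p.2 = c)
          ⊆ P ∪ {(c / 2, c / 2)} := by
        intro p hp
        rw [Finset.mem_filter] at hp
        by_cases hpe : p.1 = p.2
        · have : p = (c / 2, c / 2) := by
            have := hp.2
            obtain ⟨x, y⟩ := p
            simp only at hpe this
            subst hpe
            have hx : x = c / 2 := by linarith
            simp [hx]
          simp [this]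
        · exact Finset.mem_union_left _ (Finset.mem_filter.2 ⟨hp.1, hp.2, hpe⟩)
      calc rs c ≤ (P ∪ {(c / 2, c / 2)}).card := Finset.card_le_card this
        _ ≤ P.card + 1 := by
            refine le_trans (Finset.card_union_le _ _) ?_
            simp
    omega
  -- first coordinates
  set B := P.image Prod.fst with hB
  have hBcard : P.card = B.card := by
    rw [hB]
    rw [Finset.card_image_of_injOn]
    intro p hp q hq hpq
    simp only [Finset.mem_coe, hP, Finset.mem_filter] at hp hq
    obtain ⟨x, y⟩ := p; obtain ⟨x', y'⟩ := q
    simp only at hpq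
    have : y = y' := by
      have h1 := hp.2.1; have h2 := hq.2.1
      simp only at h1 h2
      subst hpq; linarith
    simp [hpq, this]
  have hBsub : B ⊆ A := by
    intro a ha
    rw [hB] at ha
    obtain ⟨p, hp, rfl⟩ := Finset.mem_image.1 ha
    rw [hP, Finset.mem_filter, hQ, Finset.mem_product] at hp
    exact hp.1.1
  have hBmem : ∀ a ∈ B, c - a ∈ B ∧ a ≠ c - a := by
    intro a ha
    rw [hB] at ha
    obtain ⟨p, hp, rfl⟩ := Finset.mem_image.1 ha
    rw [hP, Finset.mem_filter] at hp
    obtain ⟨hpQ, hpsum, hpne⟩ := hp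
    have h2 : p.2 = c - p.1 := by linarith
    constructor
    · rw [hB]
      refine Finset.mem_image.2 ⟨(p.2, p.1), ?_, by rw [h2]⟩
      rw [hP, Finset.mem_filter]
      rw [hQ, Finset.mem_product] at hpQ ⊢
      exact ⟨⟨hpQ.2, hpQ.1⟩, by linarith, fun hh => hpne hh.symm⟩
    · rw [← h2]; exact hpne
  -- the larger elements of each symmetric pair
  set M := B.image (fun a => max a (c - a)) with hM
  have hMsub : M ⊆ B := by
    intro m hm
    rw [hM] at hm
    obtain ⟨a, ha, rfl⟩ := Finset.mem_image.1 hm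
    rcases max_cases a (c - a) with ⟨he, _⟩ | ⟨he, _⟩
    · rw [he]; exact ha
    · rw [he]; exact (hBmem a ha).1
  have hMgt : ∀ m ∈ M, c < 2 * m := by
    intro m hm
    rw [hM] at hm
    obtain ⟨a, ha, rfl⟩ := Finset.mem_image.1 hm
    have hne := (hBmem a ha).2
    rcases max_cases a (c - a) with ⟨he, hge⟩ | ⟨he, hgt⟩
    · rw [he]
      rcases lt_or_eq_of_le hge with hlt | heq
      · linarith
      · exact absurd heq.symm hne
    · rw [he]; linarith
  have hMcard : s ≤ M.card := by
    have hsub : B ⊆ M ∪ M.image (fun m => c - m) := by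
      intro a ha
      by_cases hge : c - a ≤ a
      · refine Finset.mem_union_left _ ?_
        rw [hM]
        refine Finset.mem_image.2 ⟨a, ha, ?_⟩
        exact max_eq_left hge
      · refine Finset.mem_union_right _ ?_
        refine Finset.mem_image.2 ⟨max a (c - a), Finset.mem_image.2 ⟨a, ha, rfl⟩, ?_⟩
        push_neg at hge
        rw [max_eq_right (le_of_lt hge)]
        ring
    have : B.card ≤ M.card + M.card := by
      calc B.card ≤ (M ∪ M.image (fun m => c - m)).card := Finset.card_le_card hsub
        _ ≤ M.card + (M.image (fun m => c - m)).card := Finset.card_union_le _ _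
        _ ≤ M.card + M.card := Nat.add_le_add_left Finset.card_image_le _
    have hB2s : 2 * s ≤ B.card := hBcard ▸ hPcard
    omega
  -- choose s elements of M
  obtain ⟨M', hM'sub, hM'card⟩ := Finset.exists_subset_card_eq hMcard
  have hginj : Function.Injective (M'.orderEmbOfFin hM'card) :=
    (M'.orderEmbOfFin hM'card).injective
  have hgmem : ∀ k : Fin s, M'.orderEmbOfFin hM'card k ∈ M := fun k =>
    hM'sub (Finset.orderEmbOfFin_mem M' hM'card k)
  set f : ℕ → ℝ := fun i => if h : i < s then M'.orderEmbOfFin hM'card ⟨i, h⟩ else 0 with hf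
  have hfval : ∀ (i : ℕ) (h : i < s), f i = M'.orderEmbOfFin hM'card ⟨i, h⟩ := by
    intro i h
    rw [hf]
    exact dif_pos h
  have hfM : ∀ i < s, f i ∈ M := by
    intro i hi
    rw [hfval i hi]
    exact hgmem _
  have hfinj : ∀ i < s, ∀ j < s, f i = f j → i = j := by
    intro i hi j hj hij
    rw [hfval i hi, hfval j hj] at hij
    have := hginj hij
    exact Fin.mk.inj_iff.1 this
  refine ⟨fun i => if i < s then f i else c - f (i - s), ?_, ?_, ?_⟩
  · intro i hi
    dsimp only
    by_cases his : i < s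
    · rw [if_pos his]
      exact hBsub (hMsub (hfM i his))
    · rw [if_neg his]
      push_neg at his
      have hi' : i - s < s := by omega
      have hfB : f (i - s) ∈ B := hMsub (hfM _ hi')
      obtain ⟨hc, _⟩ := hBmem _ hfB
      exact hBsub hc
  · intro i hi j hj hij
    dsimp only at hij
    by_cases his : i < s <;> by_cases hjs : j < s
    · rw [if_pos his, if_pos hjs] at hij
      exact hfinj i his j hjs hij
    · rw [if_pos his, if_neg hjs] at hij
      exfalso
      have h1 := hMgt _ (hfM i his)
      have h2 := hMgt _ (hfM (j - s) (by omega))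
      linarith
    · rw [if_neg his, if_pos hjs] at hij
      exfalso
      have h1 := hMgt _ (hfM j hjs)
      have h2 := hMgt _ (hfM (i - s) (by omega))
      linarith
    · rw [if_neg his, if_neg hjs] at hij
      have : f (i - s) = f (j - s) := by linarith
      have := hfinj (i - s) (by omega) (j - s) (by omega) this
      omega
  · intro i hi
    have h0 : 0 < s := hs
    have hss : ¬ s + i < s := by omega
    have hss0 : ¬ s < s := lt_irrefl s
    dsimp only
    rw [if_pos hi, if_neg hss, if_pos h0, if_neg hss0]
    have e1 : s + i - s = i := by omega
    have e2 : s - s = 0 := by omega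
    rw [e1, e2]
    ring
end

section
/- Let s, t be positive integers, n > 1, and let A ⊆ ℝ with |A| = n satisfy |A − A| ≤ (n/(8s))^{1 + 1/(2^t − 1)}. Then there exist d₁,…,d_{t−1} ∈ ℝ with d_i > 0 and a₁,…,a_{2s} ∈ A such that a₁ + a_{s+1} = a₂ + a_{s+2} = ⋯ = a_s + a_{2s}, and the 2^t·s numbers a_i + ε₁d₁ + ⋯ + ε_{t−1}d_{t−1} over all 1 ≤ i ≤ 2s and ε_j ∈ {0,1} are pairwise distinct and all belong to A. -/
theorem diffSet_mono {B A : Finset ℝ} (h : B ⊆ A) : diffSet B ⊆ diffSet A := by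
  classical
  intro x hx
  simp only [diffSet, Finset.mem_image, Finset.mem_filter, Finset.mem_product] at hx ⊢
  obtain ⟨p, ⟨⟨h1, h2⟩, h3⟩, h4⟩ := hx
  exact ⟨p, ⟨⟨h h1, h h2⟩, h3⟩, h4⟩

theorem diffSet_nonempty {A : Finset ℝ} (hA : 1 < A.card) : (diffSet A).Nonempty := by
  classical
  obtain ⟨a, ha, b, hb, hab⟩ := Finset.one_lt_card.mp hA
  exact ⟨|a - b|, Finset.mem_image.mpr ⟨(a, b), by simp [Finset.mem_filter, Finset.mem_product, ha, hb, hab], rfl⟩⟩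

theorem repD_card_neg (A : Finset ℝ) (e : ℝ) :
    (A.filter (fun x => x + e ∈ A)).card = (A.filter (fun x => x + (-e) ∈ A)).card := by
  classical
  apply Finset.card_bij (fun x _ => x + e)
  · intro x hx
    simp only [Finset.mem_filter] at hx ⊢
    refine ⟨hx.2, by simpa using hx.1⟩
  · intro x hx y hy hxy
    simpa using hxy
  · intro y hy
    simp only [Finset.mem_filter] at hy
    exact ⟨y + (-e), Finset.mem_filter.mpr ⟨hy.2, by simpa using hy.1⟩, by ring⟩

theorem popular_diff (A : Finset ℝ) (hA : 1 < A.card) :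
    ∃ e : ℝ, 0 < e ∧
      A.card * (A.card - 1) ≤ 2 * (diffSet A).card * (A.filter (fun x => x + e ∈ A)).card := by
  classical
  have hPcard : A.offDiag.card = A.card * (A.card - 1) := by
    rw [Finset.offDiag_card, Nat.mul_sub_one]
  set E := A.offDiag.image (fun p => p.1 - p.2) with hEdef
  have hED : E.card ≤ 2 * (diffSet A).card := by
    have h1 : E.card ≤ 2 * (E.image (fun e => |e|)).card := by
      apply Finset.card_le_mul_card_image
      intro b hb
      have hsub : E.filter (fun e => |e| = b) ⊆ {b, -b} := by
        intro e he
        simp only [Finset.mem_filter] at he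
        rcases abs_eq (by rw [← he.2]; exact abs_nonneg _) |>.mp he.2 with h | h
        · simp [h]
        · simp [h]
      calc (E.filter (fun e => |e| = b)).card ≤ ({b, -b} : Finset ℝ).card :=
            Finset.card_le_card hsub
        _ ≤ 2 := Finset.card_insert_le _ _ |>.trans (by simp)
    have h2 : E.image (fun e => |e|) ⊆ diffSet A := by
      intro b hb
      simp only [hEdef, Finset.mem_image] at hb
      obtain ⟨e, he, rfl⟩ := hb
      obtain ⟨p, hp, rfl⟩ := he
      rw [Finset.mem_offDiag] at hp
      exact Finset.mem_image.mpr ⟨p, Finset.mem_filter.mpr ⟨Finset.mem_product.mpr ⟨hp.1, hp.2.1⟩, hp.2.2⟩, rfl⟩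
    calc E.card ≤ 2 * (E.image (fun e => |e|)).card := h1
      _ ≤ 2 * (diffSet A).card := by
          exact Nat.mul_le_mul_left 2 (Finset.card_le_card h2)
  have hPE : ∀ p ∈ A.offDiag, p.1 - p.2 ∈ E := fun p hp => Finset.mem_image_of_mem _ hp
  have hsum : A.offDiag.card = ∑ e ∈ E, (A.offDiag.filter (fun p => p.1 - p.2 = e)).card :=
    Finset.card_eq_sum_card_fiberwise hPE
  have hPne : A.offDiag.Nonempty := by
    obtain ⟨a, ha, b, hb, hab⟩ := Finset.one_lt_card.mp hA
    exact ⟨(a, b), Finset.mem_offDiag.mpr ⟨ha, hb, hab⟩⟩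
  have hEne : E.Nonempty := hPne.image _
  obtain ⟨e, heE, hemax⟩ := E.exists_max_image (fun e => (A.offDiag.filter (fun p => p.1 - p.2 = e)).card) hEne
  have hle : A.offDiag.card ≤ E.card * (A.offDiag.filter (fun p => p.1 - p.2 = e)).card := by
    rw [hsum]
    simpa using Finset.sum_le_card_nsmul E _ _ (fun x hx => hemax x hx)
  have hfiber : (A.offDiag.filter (fun p => p.1 - p.2 = e)).card = (A.filter (fun x => x + e ∈ A)).card := by
    apply Finset.card_bij (fun p _ => p.2)
    · intro p hp
      simp only [Finset.mem_filter, Finset.mem_offDiag] at hp ⊢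
      refine ⟨hp.1.2.1, ?_⟩
      have : p.1 = p.2 + e := by linarith [hp.2]
      rw [← this]; exact hp.1.1
    · intro p hp q hq hpq
      simp only [Finset.mem_filter] at hp hq
      have : p.1 = q.1 := by
        have h1 := hp.2; have h2 := hq.2
        linarith
      exact Prod.ext this hpq
    · intro y hy
      simp only [Finset.mem_filter] at hy
      have he0 : e ≠ 0 := by
        obtain ⟨p, hp, rfl⟩ := Finset.mem_image.mp heE
        rw [Finset.mem_offDiag] at hp
        intro h
        exact hp.2.2 (by linarith [sub_eq_zero.mp h])
      refine ⟨(y + e, y), ?_, rfl⟩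
      simp only [Finset.mem_filter, Finset.mem_offDiag]
      exact ⟨⟨hy.2, hy.1, by intro h; apply he0; linarith⟩, by ring⟩
  have he0 : e ≠ 0 := by
    obtain ⟨p, hp, rfl⟩ := Finset.mem_image.mp heE
    rw [Finset.mem_offDiag] at hp
    intro h
    exact hp.2.2 (by linarith [sub_eq_zero.mp h])
  have hmain : A.card * (A.card - 1) ≤ 2 * (diffSet A).card * (A.filter (fun x => x + e ∈ A)).card := by
    calc A.card * (A.card - 1) = A.offDiag.card := hPcard.symm
      _ ≤ E.card * (A.offDiag.filter (fun p => p.1 - p.2 = e)).card := hle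
      _ ≤ 2 * (diffSet A).card * (A.offDiag.filter (fun p => p.1 - p.2 = e)).card :=
          Nat.mul_le_mul_right _ hED
      _ = 2 * (diffSet A).card * (A.filter (fun x => x + e ∈ A)).card := by rw [hfiber]
  rcases lt_trichotomy e 0 with h | h | h
  · refine ⟨-e, by linarith, ?_⟩
    rwa [repD_card_neg A e] at hmain
  · exact absurd h he0
  · exact ⟨e, h, hmain⟩

theorem parity_split (A : Finset ℝ) (e : ℝ) (he : 0 < e) :
    ∃ B' : Finset ℝ, B' ⊆ A.filter (fun x => x + e ∈ A) ∧
      (A.filter (fun x => x + e ∈ A)).card ≤ 2 * B'.card ∧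
      ∀ x ∈ B', ∀ y ∈ B', x - y ≠ e := by
  classical
  set B := A.filter (fun x => x + e ∈ A) with hBdef
  have key : ∀ C : Finset ℝ, (∀ x ∈ C, ∀ y ∈ C, (Even ⌊x/e⌋ ↔ Even ⌊y/e⌋)) →
      ∀ x ∈ C, ∀ y ∈ C, x - y ≠ e := by
    intro C hC x hx y hy hxy
    have hx' : x = y + e := by linarith
    have hfloor : ⌊x/e⌋ = ⌊y/e⌋ + 1 := by
      rw [hx', show (y+e)/e = y/e + 1 by field_simp]
      exact Int.floor_add_one _
    have h := hC x hx y hy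
    rw [hfloor, Int.even_add_one] at h
    tauto
  set B0 := B.filter (fun x => Even ⌊x/e⌋) with hB0
  set B1 := B.filter (fun x => ¬ Even ⌊x/e⌋) with hB1
  have hsplit : B0.card + B1.card = B.card := Finset.card_filter_add_card_filter_not _
  rcases le_total B0.card B1.card with h | h
  · refine ⟨B1, Finset.filter_subset _ _, by omega, key B1 ?_⟩
    intro x hx y hy
    rw [hB1, Finset.mem_filter] at hx hy
    tauto
  · refine ⟨B0, Finset.filter_subset _ _, by omega, key B0 ?_⟩
    intro x hx y hy
    rw [hB0, Finset.mem_filter] at hx hy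
    tauto

theorem signedDiff_card (A : Finset ℝ) :
    (A.offDiag.image (fun p => p.1 - p.2)).card ≤ 2 * (diffSet A).card := by
  classical
  set E := A.offDiag.image (fun p => p.1 - p.2) with hEdef
  have h1 : E.card ≤ 2 * (E.image (fun e => |e|)).card := by
    apply Finset.card_le_mul_card_image
    intro b hb
    have hsub : E.filter (fun e => |e| = b) ⊆ {b, -b} := by
      intro e he
      simp only [Finset.mem_filter] at he
      rcases abs_eq (by rw [← he.2]; exact abs_nonneg _) |>.mp he.2 with h | h
      · simp [h]
      · simp [h]
    calc (E.filter (fun e => |e| = b)).card ≤ ({b, -b} : Finset ℝ).card :=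
          Finset.card_le_card hsub
      _ ≤ 2 := Finset.card_insert_le _ _ |>.trans (by simp)
  have h2 : E.image (fun e => |e|) ⊆ diffSet A := by
    intro b hb
    simp only [hEdef, Finset.mem_image] at hb
    obtain ⟨e, he, rfl⟩ := hb
    obtain ⟨p, hp, rfl⟩ := he
    rw [Finset.mem_offDiag] at hp
    exact Finset.mem_image.mpr ⟨p, Finset.mem_filter.mpr ⟨Finset.mem_product.mpr ⟨hp.1, hp.2.1⟩, hp.2.2⟩, rfl⟩
  calc E.card ≤ 2 * (E.image (fun e => |e|)).card := h1
    _ ≤ 2 * (diffSet A).card := Nat.mul_le_mul_left 2 (Finset.card_le_card h2)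

theorem popular_sum (A : Finset ℝ) (hA : 1 < A.card) :
    ∃ v : ℝ, A.card ^ 4 ≤ (2 * (diffSet A).card + 1) * A.card ^ 2 *
      (A.filter (fun x => v - x ∈ A)).card := by
  classical
  set F := A ×ˢ A with hFdef
  have hFcard : F.card = A.card ^ 2 := by rw [hFdef, Finset.card_product, sq]
  set E' := F.image (fun p => p.1 - p.2) with hE'def
  set V := F.image (fun p => p.1 + p.2) with hVdef
  set r := fun e => (F.filter (fun p => p.1 - p.2 = e)).card with hrdef
  set rs := fun v => (F.filter (fun p => p.1 + p.2 = v)).card with hrsdef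
  have hsumr : ∑ e ∈ E', r e = A.card ^ 2 := by
    rw [← hFcard]
    exact (Finset.card_eq_sum_card_fiberwise (fun p hp => Finset.mem_image_of_mem _ hp)).symm
  have hsumrs : ∑ v ∈ V, rs v = A.card ^ 2 := by
    rw [← hFcard]
    exact (Finset.card_eq_sum_card_fiberwise (fun p hp => Finset.mem_image_of_mem _ hp)).symm
  set S1 := (F ×ˢ F).filter (fun q => q.1.1 + q.1.2 = q.2.1 + q.2.2) with hS1def
  set S2 := (F ×ˢ F).filter (fun q => q.1.1 - q.1.2 = q.2.1 - q.2.2) with hS2def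
  have hS12 : S1.card = S2.card := by
    refine Finset.card_bij' (fun q _ => ((q.1.1, q.2.1), (q.2.2, q.1.2)))
      (fun q _ => ((q.1.1, q.2.2), (q.1.2, q.2.1))) ?_ ?_ ?_ ?_
    · intro q hq
      simp only [hS1def, hS2def, hFdef, Finset.mem_filter, Finset.mem_product] at hq ⊢
      obtain ⟨⟨⟨ha, hb⟩, ⟨hc, hd⟩⟩, hsum⟩ := hq
      exact ⟨⟨⟨ha, hc⟩, ⟨hd, hb⟩⟩, by linarith⟩
    · intro q hq
      simp only [hS1def, hS2def, hFdef, Finset.mem_filter, Finset.mem_product] at hq ⊢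
      obtain ⟨⟨⟨ha, hb⟩, ⟨hc, hd⟩⟩, hdiff⟩ := hq
      exact ⟨⟨⟨ha, hd⟩, ⟨hb, hc⟩⟩, by linarith⟩
    · intro q hq
      exact Prod.ext (Prod.ext rfl rfl) (Prod.ext rfl rfl)
    · intro q hq
      exact Prod.ext (Prod.ext rfl rfl) (Prod.ext rfl rfl)
  have hS2sum : S2.card = ∑ e ∈ E', (r e) ^ 2 := by
    have hmaps : ∀ q ∈ S2, q.1.1 - q.1.2 ∈ E' := by
      intro q hq
      simp only [hS2def, Finset.mem_filter, Finset.mem_product] at hq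
      exact Finset.mem_image_of_mem _ hq.1.1
    rw [Finset.card_eq_sum_card_fiberwise hmaps]
    apply Finset.sum_congr rfl
    intro e he
    have : S2.filter (fun q => q.1.1 - q.1.2 = e) =
        (F.filter (fun p => p.1 - p.2 = e)) ×ˢ (F.filter (fun p => p.1 - p.2 = e)) := by
      ext q
      simp only [hS2def, Finset.mem_filter, Finset.mem_product]
      constructor
      · rintro ⟨⟨⟨h1, h2⟩, h3⟩, h4⟩
        exact ⟨⟨h1, h4⟩, ⟨h2, by rw [← h3]; exact h4⟩⟩
      · rintro ⟨⟨h1, h4⟩, ⟨h2, h5⟩⟩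
        exact ⟨⟨⟨h1, h2⟩, by rw [h4, h5]⟩, h4⟩
    rw [this, Finset.card_product, sq]
  have hS1sum : S1.card = ∑ v ∈ V, (rs v) ^ 2 := by
    have hmaps : ∀ q ∈ S1, q.1.1 + q.1.2 ∈ V := by
      intro q hq
      simp only [hS1def, Finset.mem_filter, Finset.mem_product] at hq
      exact Finset.mem_image_of_mem _ hq.1.1
    rw [Finset.card_eq_sum_card_fiberwise hmaps]
    apply Finset.sum_congr rfl
    intro v hv
    have : S1.filter (fun q => q.1.1 + q.1.2 = v) =
        (F.filter (fun p => p.1 + p.2 = v)) ×ˢ (F.filter (fun p => p.1 + p.2 = v)) := by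
      ext q
      simp only [hS1def, Finset.mem_filter, Finset.mem_product]
      constructor
      · rintro ⟨⟨⟨h1, h2⟩, h3⟩, h4⟩
        exact ⟨⟨h1, h4⟩, ⟨h2, by rw [← h3]; exact h4⟩⟩
      · rintro ⟨⟨h1, h4⟩, ⟨h2, h5⟩⟩
        exact ⟨⟨⟨h1, h2⟩, by rw [h4, h5]⟩, h4⟩
    rw [this, Finset.card_product, sq]
  -- Cauchy-Schwarz
  have hCS : (A.card ^ 2) ^ 2 ≤ E'.card * ∑ e ∈ E', (r e) ^ 2 := by
    rw [← hsumr]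
    exact sq_sum_le_card_mul_sum_sq
  have hE'card : E'.card ≤ 2 * (diffSet A).card + 1 := by
    have hsub : E' ⊆ insert 0 (A.offDiag.image (fun p => p.1 - p.2)) := by
      intro e he
      simp only [hE'def, hFdef, Finset.mem_image, Finset.mem_product] at he
      obtain ⟨p, ⟨h1, h2⟩, rfl⟩ := he
      by_cases h : p.1 = p.2
      · simp [h]
      · exact Finset.mem_insert_of_mem
          (Finset.mem_image_of_mem _ (Finset.mem_offDiag.mpr ⟨h1, h2, h⟩))
    calc E'.card ≤ (insert 0 (A.offDiag.image (fun p => p.1 - p.2))).card :=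
          Finset.card_le_card hsub
      _ ≤ (A.offDiag.image (fun p => p.1 - p.2)).card + 1 := Finset.card_insert_le _ _
      _ ≤ 2 * (diffSet A).card + 1 := Nat.add_le_add_right (signedDiff_card A) 1
  -- max fiber of sums
  have hVne : V.Nonempty := by
    obtain ⟨a, ha⟩ := Finset.card_pos.mp (show 0 < A.card by omega)
    exact ⟨a + a, Finset.mem_image_of_mem _ (Finset.mem_product.mpr (⟨ha, ha⟩ : a ∈ A ∧ a ∈ A) : (a, a) ∈ F)⟩
  obtain ⟨v, hvV, hvmax⟩ := V.exists_max_image rs hVne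
  have hS1le : S1.card ≤ A.card ^ 2 * rs v := by
    rw [hS1sum, ← hsumrs, Finset.sum_mul]
    apply Finset.sum_le_sum
    intro w hw
    rw [sq]
    exact Nat.mul_le_mul_left _ (hvmax w hw)
  have hrsv : rs v = (A.filter (fun x => v - x ∈ A)).card := by
    apply Finset.card_bij (fun p _ => p.1)
    · intro p hp
      simp only [hFdef, Finset.mem_filter, Finset.mem_product] at hp ⊢
      exact ⟨hp.1.1, by rw [show v - p.1 = p.2 by linarith [hp.2]]; exact hp.1.2⟩
    · intro p hp q hq hpq
      simp only [hFdef, Finset.mem_filter, Finset.mem_product] at hp hq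
      have : p.2 = q.2 := by
        have h1 := hp.2; have h2 := hq.2
        linarith
      exact Prod.ext hpq this
    · intro x hx
      simp only [Finset.mem_filter] at hx
      exact ⟨(x, v - x), by
        simp only [hFdef, Finset.mem_filter, Finset.mem_product]
        exact ⟨⟨hx.1, hx.2⟩, by ring⟩, rfl⟩
  refine ⟨v, ?_⟩
  calc A.card ^ 4 = (A.card ^ 2) ^ 2 := by ring
    _ ≤ E'.card * ∑ e ∈ E', (r e) ^ 2 := hCS
    _ = E'.card * S2.card := by rw [hS2sum]
    _ = E'.card * S1.card := by rw [hS12]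
    _ ≤ (2 * (diffSet A).card + 1) * S1.card := Nat.mul_le_mul_right _ hE'card
    _ ≤ (2 * (diffSet A).card + 1) * (A.card ^ 2 * rs v) := Nat.mul_le_mul_left _ hS1le
    _ = (2 * (diffSet A).card + 1) * A.card ^ 2 * (A.filter (fun x => v - x ∈ A)).card := by
        rw [hrsv, mul_assoc]

theorem cube_base (s : ℕ) (hs : 0 < s) (A : Finset ℝ) (hA : 1 < A.card)
    (hdiff : ((diffSet A).card : ℝ) ≤ ((A.card : ℝ) / (8 * s)) ^ (2 : ℝ)) :
    ∃ a : ℕ → ℝ, (∀ i < s, a i + a (s + i) = a 0 + a s) ∧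
      (∀ i < 2 * s, a i ∈ A) ∧
      (∀ i < 2 * s, ∀ i' < 2 * s, a i = a i' → i = i') := by
  classical
  obtain ⟨v, hv⟩ := popular_sum A hA
  set P := A.filter (fun x => v - x ∈ A) with hPdef
  set U := (A.card : ℝ) / (8 * s) with hUdef
  have hApos : (0:ℝ) < (A.card : ℝ) := by exact_mod_cast Nat.lt_of_lt_of_le Nat.zero_lt_one hA.le
  have hspos : (0:ℝ) < (s:ℝ) := by exact_mod_cast hs
  have hUpos : (0:ℝ) < U := by rw [hUdef]; positivity
  have hD1 : (1:ℕ) ≤ (diffSet A).card := Finset.card_pos.mpr (diffSet_nonempty hA)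
  have hU1 : (1:ℝ) ≤ U := by
    by_contra h
    push_neg at h
    have h2 := Real.rpow_lt_one (le_of_lt hUpos) h (by norm_num : (0:ℝ) < 2)
    have h3 : ((diffSet A).card : ℝ) < 1 := lt_of_le_of_lt hdiff h2
    have h4 : (1:ℝ) ≤ ((diffSet A).card : ℝ) := by exact_mod_cast hD1
    linarith
  have hD2 : ((diffSet A).card : ℝ) ≤ U ^ 2 := by
    calc ((diffSet A).card : ℝ) ≤ U ^ (2:ℝ) := hdiff
      _ = U ^ (2:ℕ) := by rw [show (2:ℝ) = ((2:ℕ):ℝ) by norm_num, Real.rpow_natCast]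
  have hP : 2 * s + 1 ≤ P.card := by
    have hcast : ((A.card:ℝ))^4 ≤ (2*((diffSet A).card:ℝ)+1) * (A.card:ℝ)^2 * (P.card:ℝ) := by
      exact_mod_cast hv
    have hn : (A.card : ℝ) = 8 * s * U := by
      rw [hUdef]; field_simp
    have hs1 : (1:ℝ) ≤ (s:ℝ) := by exact_mod_cast hs
    clear hUdef hv
    clear_value U
    have hPc0 : (0:ℝ) ≤ (P.card:ℝ) := Nat.cast_nonneg _
    have hD0 : (0:ℝ) ≤ ((diffSet A).card : ℝ) := Nat.cast_nonneg _
    have hn2 : (A.card:ℝ)^2 = 64*(s:ℝ)^2*U^2 := by rw [hn]; ring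
    have hU2 : (1:ℝ) ≤ U^2 := by nlinarith [hU1]
    have hDU : 2*((diffSet A).card:ℝ)+1 ≤ 3*U^2 := by linarith only [hD2, hU2]
    have h4 : ((A.card:ℝ)^2)^2 ≤ 3*U^2 * ((A.card:ℝ)^2 * (P.card:ℝ)) := by
      calc ((A.card:ℝ)^2)^2 = (A.card:ℝ)^4 := by ring
        _ ≤ (2*((diffSet A).card:ℝ)+1) * (A.card:ℝ)^2 * (P.card:ℝ) := hcast
        _ ≤ 3*U^2 * ((A.card:ℝ)^2 * (P.card:ℝ)) := by
            nlinarith [mul_le_mul_of_nonneg_right hDU (mul_nonneg (sq_nonneg ((A.card:ℝ))) hPc0)]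
    have h5 : 64*(s:ℝ)^2 ≤ 3*(P.card:ℝ) := by
      rw [hn2] at h4
      have hW : (0:ℝ) < U^2 := by positivity
      have h6 : (64*(s:ℝ)^2*U^2) * (64*(s:ℝ)^2) ≤ (64*(s:ℝ)^2*U^2) * (3*(P.card:ℝ)) := by
        nlinarith [h4]
      have h7 : (0:ℝ) < 64*(s:ℝ)^2*U^2 := by positivity
      exact le_of_mul_le_mul_left h6 h7
    have key : (2*(s:ℝ)+1) ≤ (P.card : ℝ) := by nlinarith [h5, hs1]
    exact_mod_cast key
  -- split P around v/2
  set Plt := P.filter (fun x => x < v/2) with hPlt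
  have hcard2 : P.card ≤ 2 * Plt.card + 1 := by
    set Q := P.filter (fun x => ¬ x < v/2) with hQ
    have hsplit : Plt.card + Q.card = P.card :=
      Finset.card_filter_add_card_filter_not (p := fun x => x < v/2)
    have h1 : (Q.filter (fun x => x = v/2)).card ≤ 1 := by
      apply Finset.card_le_one.mpr
      intro a ha b hb
      simp only [Finset.mem_filter] at ha hb
      rw [ha.2, hb.2]
    have h2 : (Q.filter (fun x => ¬ x = v/2)).card ≤ Plt.card := by
      apply Finset.card_le_card_of_injOn (fun x => v - x)
      · intro y hy
        simp only [hQ, hPlt, hPdef, Finset.mem_coe, Finset.mem_filter] at hy ⊢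
        obtain ⟨⟨⟨hyA, hvy⟩, hge⟩, hne⟩ := hy
        push_neg at hge
        refine ⟨⟨hvy, by rw [show v - (v-y) = y by ring]; exact hyA⟩, by
          rcases lt_or_eq_of_le hge with h | h
          · linarith
          · exact absurd h.symm hne⟩
      · intro x hx y hy hxy
        simp only at hxy
        linarith
    have hsplit2 : (Q.filter (fun x => x = v/2)).card + (Q.filter (fun x => ¬ x = v/2)).card = Q.card :=
      Finset.card_filter_add_card_filter_not (p := fun x => x = v/2)
    omega
  have hPlts : s ≤ Plt.card := by omega
  obtain ⟨T, hTsub, hTcard⟩ := Finset.exists_subset_card_eq hPlts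
  set f := T.orderIsoOfFin hTcard with hf
  set x : ℕ → ℝ := fun m => if h : m < s then ((f ⟨m, h⟩ : T) : ℝ) else 0 with hxdef
  have hxval : ∀ m (h : m < s), x m = ((f ⟨m, h⟩ : T) : ℝ) := fun m h => dif_pos h
  have hxmem : ∀ m, m < s → x m ∈ Plt := by
    intro m h
    rw [hxval m h]
    exact hTsub (f ⟨m, h⟩).2
  have hxP : ∀ m, m < s → x m ∈ A ∧ v - x m ∈ A ∧ x m < v/2 := by
    intro m h
    have := hxmem m h
    simp only [hPlt, hPdef, Finset.mem_filter] at this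
    exact ⟨this.1.1, this.1.2, this.2⟩
  have hxinj : ∀ i, i < s → ∀ j, j < s → x i = x j → i = j := by
    intro i hi j hj h
    rw [hxval i hi, hxval j hj] at h
    have h2 : f ⟨i, hi⟩ = f ⟨j, hj⟩ := Subtype.coe_injective h
    have h3 := f.injective h2
    simpa [Fin.mk.injEq] using h3
  refine ⟨fun i => if i < s then x i else if i < 2*s then v - x (i - s) else 0, ?_, ?_, ?_⟩
  · intro i hi
    simp only [if_pos hi, if_neg (show ¬ s + i < s by omega), if_pos (show s + i < 2*s by omega),
      if_pos hs, if_neg (show ¬ s < s by omega), if_pos (show s < 2*s by omega),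
      show s + i - s = i from by omega, show s - s = 0 from by omega]
    ring
  · intro i hi
    by_cases h : i < s
    · simp only [if_pos h]
      exact (hxP i h).1
    · simp only [if_neg h, if_pos hi]
      have h2 : i - s < s := by omega
      exact (hxP (i-s) h2).2.1
  · intro i hi i' hi' heq
    by_cases h : i < s <;> by_cases h' : i' < s
    · simp only [if_pos h, if_pos h'] at heq
      exact hxinj i h i' h' heq
    · simp only [if_pos h, if_neg h', if_pos hi'] at heq
      have h2 : i' - s < s := by omega
      have := (hxP i h).2.2
      have := (hxP (i'-s) h2).2.2
      linarith
    · simp only [if_neg h, if_pos hi, if_pos h'] at heq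
      have h2 : i - s < s := by omega
      have := (hxP i' h').2.2
      have := (hxP (i-s) h2).2.2
      linarith
    · simp only [if_neg h, if_pos hi, if_neg h', if_pos hi'] at heq
      have h2 : i - s < s := by omega
      have h2' : i' - s < s := by omega
      have h3 : x (i-s) = x (i'-s) := by linarith
      have := hxinj _ h2 _ h2' h3
      omega

theorem aux_cube : ∀ (k s : ℕ), 0 < s → ∀ (A : Finset ℝ), 1 < A.card →
    (((diffSet A).card : ℝ) ≤ ((A.card : ℝ) / (8 * s)) ^ ((1:ℝ) + 1 / ((2:ℝ) ^ (k+1) - 1))) →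
    ∃ (d : Fin k → ℝ) (a : ℕ → ℝ),
      (∀ j, 0 < d j) ∧
      (∀ i < s, a i + a (s + i) = a 0 + a s) ∧
      (∀ i < 2 * s, ∀ ε : Fin k → Bool, a i + ∑ j, (if ε j then d j else 0) ∈ A) ∧
      (∀ i < 2 * s, ∀ i' < 2 * s, ∀ ε ε' : Fin k → Bool,
        a i + ∑ j, (if ε j then d j else 0) = a i' + ∑ j, (if ε' j then d j else 0) →
          i = i' ∧ ε = ε') := by
  intro k
  induction k with
  | zero =>
    intro s hs A hA hdiff
    rw [show ((1:ℝ) + 1 / ((2:ℝ) ^ (0+1) - 1)) = 2 by norm_num] at hdiff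
    obtain ⟨a, h1, h2, h3⟩ := cube_base s hs A hA hdiff
    refine ⟨Fin.elim0, a, (fun j => j.elim0), h1, ?_, ?_⟩
    · intro i hi ε
      simpa using h2 i hi
    · intro i hi i' hi' ε ε' h
      simp only [Finset.univ_eq_empty, Finset.sum_empty, add_zero] at h
      exact ⟨h3 i hi i' hi' h, funext fun j => j.elim0⟩
  | succ k IH =>
    intro s hs A hA hdiff
    classical
    have hApos : 0 < A.card := by omega
    have hspos : (0:ℝ) < (s:ℝ) := by exact_mod_cast hs
    have hs1 : (1:ℝ) ≤ (s:ℝ) := by exact_mod_cast hs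
    set U := (A.card : ℝ) / (8 * s) with hU
    have hUpos : (0:ℝ) < U := by
      rw [hU]
      have : (0:ℝ) < (A.card:ℝ) := by exact_mod_cast hApos
      positivity
    set D := (diffSet A).card with hDdef
    clear_value U
    have hD1 : (1:ℕ) ≤ D := Finset.card_pos.mpr (diffSet_nonempty hA)
    have hD1R : (1:ℝ) ≤ (D:ℝ) := by exact_mod_cast hD1
    have hDpos : (0:ℝ) < (D:ℝ) := by linarith
    have hm2 : (2:ℝ) ≤ (2:ℝ)^(k+1) := by
      calc (2:ℝ) = 2^1 := (pow_one 2).symm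
        _ ≤ 2^(k+1) := by
          apply pow_le_pow_right₀ (by norm_num)
          omega
    have hm4 : (2:ℝ)^(k+1+1) = 2*(2:ℝ)^(k+1) := by ring
    set β : ℝ := 1 / ((2:ℝ)^(k+1) - 1) with hβ
    set α : ℝ := 1 / ((2:ℝ)^(k+1+1) - 1) with hα
    have hβpos : 0 < β := by
      rw [hβ]
      exact one_div_pos.mpr (by linarith)
    have hαpos : 0 < α := by
      rw [hα, hm4]
      exact one_div_pos.mpr (by linarith)
    have hβ1 : β ≤ 1 := by
      rw [hβ, div_le_one (by linarith)]
      linarith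
    clear_value β α
    have hU1 : (1:ℝ) ≤ U := by
      by_contra h
      push_neg at h
      have h2 := Real.rpow_lt_one (le_of_lt hUpos) h (by linarith : (0:ℝ) < 1 + α)
      linarith [hdiff]
    have hkey : ((1:ℝ)+α)*((2+β)/(1+β)) = 2 := by
      rw [hα, hβ, hm4]
      have hne1 : (2:ℝ)^(k+1) - 1 ≠ 0 := by linarith
      have hne2 : 2*(2:ℝ)^(k+1) - 1 ≠ 0 := by linarith
      have hne3 : (1:ℝ) + 1/((2:ℝ)^(k+1) - 1) ≠ 0 := by
        have : 0 < 1/((2:ℝ)^(k+1) - 1) := one_div_pos.mpr (by linarith)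
        linarith
      field_simp
      ring
    -- popular difference and split
    obtain ⟨e, hepos, hcount⟩ := popular_diff A hA
    rw [← hDdef] at hcount
    clear_value D
    obtain ⟨B', hB'sub, hB'card, hB'no⟩ := parity_split A e hepos
    set m := B'.card with hmdef
    clear_value m
    have hcount2 : A.card*(A.card-1) ≤ 4*D*m := by
      calc A.card*(A.card-1) ≤ 2*D*(A.filter (fun x => x + e ∈ A)).card := hcount
        _ ≤ 2*D*(2*m) := Nat.mul_le_mul_left _ hB'card
        _ = 4*D*m := by ring
    have hnR : ((A.card : ℝ)) = 8*s*U := by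
      rw [hU]; field_simp
    have hcountR : (A.card:ℝ) * ((A.card:ℝ)-1) ≤ 4*(D:ℝ)*(m:ℝ) := by
      have h1 : ((A.card*(A.card-1):ℕ):ℝ) ≤ ((4*D*m:ℕ):ℝ) := Nat.cast_le.mpr hcount2
      push_cast [Nat.cast_sub (show 1 ≤ A.card by omega)] at h1
      linarith
    set X := (D:ℝ) ^ ((1:ℝ)/(1+β)) with hXdef
    have hX1 : (1:ℝ) ≤ X := Real.one_le_rpow hD1R (by positivity)
    clear_value X
    have hXpos : (0:ℝ) < X := by linarith
    have hU2eq : U ^ (2:ℝ) = U^2 := by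
      rw [show (2:ℝ)=((2:ℕ):ℝ) by norm_num, Real.rpow_natCast]
    have step1 : (D:ℝ) ^ ((2+β)/(1+β)) ≤ U ^ (2:ℕ) := by
      calc (D:ℝ) ^ ((2+β)/(1+β)) ≤ (U ^ ((1:ℝ)+α)) ^ ((2+β)/(1+β)) :=
            Real.rpow_le_rpow (le_of_lt hDpos) hdiff (by positivity)
        _ = U ^ (((1:ℝ)+α) * ((2+β)/(1+β))) := by rw [← Real.rpow_mul (le_of_lt hUpos)]
        _ = U ^ (2:ℝ) := by rw [hkey]
        _ = U ^ (2:ℕ) := hU2eq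
    have step2 : (D:ℝ) ^ ((2+β)/(1+β)) = (D:ℝ) * X := by
      have h1 : (2+β)/(1+β) = 1 + (1:ℝ)/(1+β) := by
        field_simp
        ring
      rw [h1, Real.rpow_add hDpos, Real.rpow_one, hXdef]
    have step4 : 32*(s:ℝ)*(U^(2:ℕ)) ≤ (A.card:ℝ)*((A.card:ℝ)-1) := by
      rw [hnR]
      have hsU : U ≤ (s:ℝ)*U := by nlinarith [mul_le_mul_of_nonneg_right hs1 (le_of_lt hUpos)]
      have h8 : 0 ≤ 8*((s:ℝ)*U) - 4*U - 1 := by linarith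
      have hprod : 0 ≤ (8*(s:ℝ)*U) * (8*(s:ℝ)*U - 4*U - 1) := by
        apply mul_nonneg
        · positivity
        · linarith
      linarith [hprod]
    have step5 : 8*(s:ℝ)*X ≤ (m:ℝ) := by
      have h1 : 32*(s:ℝ)*((D:ℝ)*X) ≤ 4*(D:ℝ)*(m:ℝ) := by
        calc 32*(s:ℝ)*((D:ℝ)*X) = 32*(s:ℝ)*((D:ℝ)^((2+β)/(1+β))) := by rw [step2]
          _ ≤ 32*(s:ℝ)*(U^(2:ℕ)) := by
              have := mul_le_mul_of_nonneg_left step1 (show (0:ℝ) ≤ 32*(s:ℝ) by positivity)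
              linarith [this]
          _ ≤ (A.card:ℝ)*((A.card:ℝ)-1) := step4
          _ ≤ 4*(D:ℝ)*(m:ℝ) := hcountR
      have h2 : (4*(D:ℝ)) * (8*(s:ℝ)*X) ≤ (4*(D:ℝ)) * (m:ℝ) := by
        have h3 : (4*(D:ℝ))*(8*(s:ℝ)*X) = 32*(s:ℝ)*((D:ℝ)*X) := by ring
        linarith [h1, h3.le, h3.ge]
      exact le_of_mul_le_mul_left h2 (by positivity)
    have step6 : X ≤ (m:ℝ)/(8*(s:ℝ)) := by
      rw [le_div_iff₀ (by positivity)]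
      linarith [step5]
    have hm1 : 1 < m := by
      have h0 : (1:ℝ)*(1:ℝ) ≤ (s:ℝ)*X := mul_le_mul hs1 hX1 (by norm_num) (by linarith)
      have h3 : (1:ℝ) < (m:ℝ) := by linarith [step5, h0]
      exact_mod_cast h3
    rw [hmdef] at hm1
    have step7 : ((diffSet B').card : ℝ) ≤ ((B'.card:ℝ)/(8*(s:ℝ))) ^ ((1:ℝ) + β) := by
      have hsub2 : B' ⊆ A := hB'sub.trans (Finset.filter_subset _ _)
      have hcard : ((diffSet B').card : ℝ) ≤ (D:ℝ) := by
        rw [hDdef]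
        exact_mod_cast Finset.card_le_card (diffSet_mono hsub2)
      have hDX : (D:ℝ) = X ^ ((1:ℝ)+β) := by
        rw [hXdef, ← Real.rpow_mul (le_of_lt hDpos)]
        rw [show ((1:ℝ)/(1+β)) * (1+β) = 1 by field_simp]
        rw [Real.rpow_one]
      calc ((diffSet B').card : ℝ) ≤ (D:ℝ) := hcard
        _ = X ^ ((1:ℝ)+β) := hDX
        _ ≤ ((m:ℝ)/(8*(s:ℝ))) ^ ((1:ℝ)+β) :=
            Real.rpow_le_rpow (le_of_lt hXpos) step6 (by positivity)
        _ = ((B'.card:ℝ)/(8*(s:ℝ))) ^ ((1:ℝ) + β) := by rw [hmdef]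
    obtain ⟨d', a, hd'pos, hpairs, hmem, hdist⟩ := IH s hs B' hm1 step7
    have hB'A : ∀ p ∈ B', p ∈ A ∧ p + e ∈ A := by
      intro p hp
      have := hB'sub hp
      rw [Finset.mem_filter] at this
      exact this
    have hsumsplit : ∀ (ε : Fin (k+1) → Bool), (∑ j, (if ε j then Fin.snoc d' e j else 0))
        = (∑ j : Fin k, (if ε j.castSucc then d' j else 0)) + (if ε (Fin.last k) then e else 0) := by
      intro ε
      rw [Fin.sum_univ_castSucc]
      simp [Fin.snoc_castSucc, Fin.snoc_last]
    refine ⟨Fin.snoc d' e, a, ?_, hpairs, ?_, ?_⟩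
    · intro j
      refine Fin.lastCases ?_ ?_ j
      · simpa using hepos
      · intro jj
        simpa using hd'pos jj
    · intro i hi ε
      rw [hsumsplit ε, ← add_assoc]
      have hp := hmem i hi (fun j => ε j.castSucc)
      have hpA := hB'A _ hp
      cases hεl : ε (Fin.last k)
      · simpa using hpA.1
      · simpa using hpA.2
    · intro i hi i' hi' ε ε' heq
      rw [hsumsplit ε, hsumsplit ε', ← add_assoc, ← add_assoc] at heq
      set p := a i + (∑ j : Fin k, (if ε j.castSucc then d' j else 0)) with hpdef
      set q := a i' + (∑ j : Fin k, (if ε' j.castSucc then d' j else 0)) with hqdef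
      have hpB : p ∈ B' := hmem i hi (fun j => ε j.castSucc)
      have hqB : q ∈ B' := hmem i' hi' (fun j => ε' j.castSucc)
      have conclude : p = q →
          ε (Fin.last k) = ε' (Fin.last k) → i = i' ∧ ε = ε' := by
        intro h hl
        obtain ⟨hii, hεε⟩ := hdist i hi i' hi' (fun j => ε j.castSucc) (fun j => ε' j.castSucc) h
        refine ⟨hii, funext fun j => ?_⟩
        refine Fin.lastCases ?_ (fun jj => ?_) j
        · exact hl
        · exact congrFun hεε jj
      clear_value p q
      cases hεl : ε (Fin.last k) <;> cases hε'l : ε' (Fin.last k) <;>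
        simp only [hεl, hε'l, if_true, if_false, Bool.false_eq_true] at heq
      · exact conclude (by linarith only [heq]) (by rw [hεl, hε'l])
      · exact absurd (show p - q = e by linarith only [heq]) (hB'no _ hpB _ hqB)
      · exact absurd (show q - p = e by linarith only [heq]) (hB'no _ hqB _ hpB)
      · exact conclude (by linarith only [heq]) (by rw [hεl, hε'l])

/-- Cube-finding lemma: if `s, t ≥ 1`, `n > 1`, and `A ⊆ ℝ` has `|A| = n` and
`|A − A| ≤ (n/(8s))^{1 + 1/(2^t − 1)}`, then there are positive reals `d 0, …, d (t−2)`
and elements `a 0, …, a (2s−1)` of `A` with `a i + a (s+i) = a 0 + a s` for all `i < s`,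
such that the `2^t · s` numbers `a i + ε₁d₁ + ⋯ + ε_{t−1}d_{t−1}` (over `i < 2s` and
`ε_j ∈ {0,1}`) are pairwise distinct and all belong to `A`. -/
theorem find_cube (s t n : ℕ) (hs : 0 < s) (ht : 0 < t) (hn : 1 < n)
    (A : Finset ℝ) (hA : A.card = n)
    (hdiff : ((diffSet A).card : ℝ) ≤
      ((n : ℝ) / (8 * s)) ^ ((1 : ℝ) + 1 / ((2 : ℝ) ^ t - 1))) :
    ∃ (d : Fin (t - 1) → ℝ) (a : ℕ → ℝ),
      (∀ j, 0 < d j) ∧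
      (∀ i < s, a i + a (s + i) = a 0 + a s) ∧
      (∀ i < 2 * s, ∀ ε : Fin (t - 1) → Bool,
        a i + ∑ j, (if ε j then d j else 0) ∈ A) ∧
      (∀ i < 2 * s, ∀ i' < 2 * s, ∀ ε ε' : Fin (t - 1) → Bool,
        a i + ∑ j, (if ε j then d j else 0) = a i' + ∑ j, (if ε' j then d j else 0) →
          i = i' ∧ ε = ε') := by
  subst hA
  have ht1 : t - 1 + 1 = t := Nat.succ_pred_eq_of_pos ht
  apply aux_cube (t-1) s hs A hn
  rw [ht1]
  exact hdiff
end

section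
/- Let (*₁) and (*₂) be distinct difference equalities in variables x₁,…,x_k (each of the form x_{i₁} − x_{i₂} − x_{i₃} + x_{i₄} = 0 with {i₁,i₄} ≠ {i₂,i₃}), such that the pair {(*₁),(*₂)} does not linearly imply any equation of the form x_i − x_j = 0 (i ≠ j), 2x_i − 2x_j = 0 (i ≠ j), or x_i − 2x_j + x_m = 0 (i, j, m distinct). Then (*₁) and (*₂) share at most 2 variables (a variable appears in an equation if its coefficient is nonzero). -/
/-- `v` is the content of a difference equality in `x₁,…,x_k`: an equation of the form
`x_{i₁} − x_{i₂} − x_{i₃} + x_{i₄} = 0` with `{i₁,i₄} ≠ {i₂,i₃}`. -/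
def IsDiffEq (k : ℕ) (v : Fin k → ℝ) : Prop :=
  ∃ i1 i2 i3 i4 : Fin k, ({i1, i4} : Finset (Fin k)) ≠ ({i2, i3} : Finset (Fin k)) ∧
    v = (Pi.single i1 1 : Fin k → ℝ) + (Pi.single i4 1 : Fin k → ℝ)
      - (Pi.single i2 1 : Fin k → ℝ) - (Pi.single i3 1 : Fin k → ℝ)

namespace DiffAux
variable {k : ℕ}

def P (i : Fin k) : Fin k → ℝ := Pi.single i 1

def V (a b c d : Fin k) : Fin k → ℝ := P a + P b - P c - P d

def Bad (v1 v2 : Fin k → ℝ) : Prop :=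
  ∃ (c1 c2 : ℝ) (i j m : Fin k),
      (i ≠ j ∧ c1 • v1 + c2 • v2 =
        (Pi.single i 1 : Fin k → ℝ) - (Pi.single j 1 : Fin k → ℝ)) ∨
      (i ≠ j ∧ c1 • v1 + c2 • v2 =
        (2 : ℝ) • ((Pi.single i 1 : Fin k → ℝ) - (Pi.single j 1 : Fin k → ℝ))) ∨
      (i ≠ j ∧ j ≠ m ∧ i ≠ m ∧ c1 • v1 + c2 • v2 =
        (Pi.single i 1 : Fin k → ℝ) - (2 : ℝ) • (Pi.single j 1 : Fin k → ℝ)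
          + (Pi.single m 1 : Fin k → ℝ))

lemma Bad_zero_left {v1 v2 : Fin k → ℝ} (h : Bad v1 0) : Bad v1 v2 := by
  obtain ⟨c1, c2, i, j, m, h⟩ := h
  refine ⟨c1, 0, i, j, m, ?_⟩
  simp only [smul_zero, add_zero, zero_smul] at h ⊢
  exact h

lemma Bad_zero_right {v1 v2 : Fin k → ℝ} (h : Bad v2 0) : Bad v1 v2 := by
  obtain ⟨c1, c2, i, j, m, h⟩ := h
  refine ⟨0, c1, i, j, m, ?_⟩
  simp only [smul_zero, add_zero, zero_smul, zero_add] at h ⊢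
  exact h

lemma Bad_neg_left {v1 v2 : Fin k → ℝ} (h : Bad (-v1) v2) : Bad v1 v2 := by
  obtain ⟨c1, c2, i, j, m, h⟩ := h
  refine ⟨-c1, c2, i, j, m, ?_⟩
  simp only [smul_neg] at h
  simp only [neg_smul]
  exact h

lemma Bad_neg_right {v1 v2 : Fin k → ℝ} (h : Bad v1 (-v2)) : Bad v1 v2 := by
  obtain ⟨c1, c2, i, j, m, h⟩ := h
  refine ⟨c1, -c2, i, j, m, ?_⟩
  simp only [smul_neg] at h
  simp only [neg_smul]
  exact h

lemma nf {v : Fin k → ℝ} (h : IsDiffEq k v) (hb : ¬ Bad v 0) :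
    ∃ a b c d : Fin k, a ≠ b ∧ a ≠ c ∧ a ≠ d ∧ b ≠ c ∧ b ≠ d ∧ c ≠ d ∧ v = V a b c d := by
  obtain ⟨i1, i2, i3, i4, hset, rfl⟩ := h
  set v := (Pi.single i1 1 : Fin k → ℝ) + (Pi.single i4 1 : Fin k → ℝ)
      - (Pi.single i2 1 : Fin k → ℝ) - (Pi.single i3 1 : Fin k → ℝ) with hv
  by_cases h12 : i1 = i2
  · subst h12
    have h43 : i4 ≠ i3 := by
      intro h; subst h; exact hset (by ext x; simp; try tauto)
    exact absurd ⟨1, 0, i4, i3, i3, Or.inl ⟨h43, by rw [hv]; module⟩⟩ hb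
  by_cases h13 : i1 = i3
  · subst h13
    have h42 : i4 ≠ i2 := by
      intro h; subst h; exact hset (by ext x; simp; try tauto)
    exact absurd ⟨1, 0, i4, i2, i2, Or.inl ⟨h42, by rw [hv]; module⟩⟩ hb
  by_cases h42 : i4 = i2
  · subst h42
    have h13' : i1 ≠ i3 := h13
    exact absurd ⟨1, 0, i1, i3, i3, Or.inl ⟨h13', by rw [hv]; module⟩⟩ hb
  by_cases h43 : i4 = i3
  · subst h43
    exact absurd ⟨1, 0, i1, i2, i2, Or.inl ⟨h12, by rw [hv]; module⟩⟩ hb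
  by_cases h14 : i1 = i4
  · subst h14
    by_cases h23 : i2 = i3
    · subst h23
      exact absurd ⟨1, 0, i1, i2, i2, Or.inr (Or.inl ⟨h12, by rw [hv]; module⟩)⟩ hb
    · exact absurd ⟨-1, 0, i2, i1, i3,
        Or.inr (Or.inr ⟨Ne.symm h12, h13, h23, by rw [hv]; module⟩)⟩ hb
  by_cases h23 : i2 = i3
  · subst h23
    exact absurd ⟨1, 0, i1, i2, i4,
      Or.inr (Or.inr ⟨h12, Ne.symm h42, h14, by rw [hv]; module⟩)⟩ hb
  · exact ⟨i1, i4, i2, i3, h14, h12, h13, h42, h43, h23, by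
      rw [hv]; simp only [V, P]⟩

lemma supp_V {a b c d : Fin k} (hab : a ≠ b) (hac : a ≠ c) (had : a ≠ d)
    (hbc : b ≠ c) (hbd : b ≠ d) (hcd : c ≠ d) :
    Function.support (V a b c d) = {a, b, c, d} := by
  ext x
  simp only [Function.mem_support, V, P, Pi.add_apply, Pi.sub_apply, Pi.single_apply,
    Set.mem_insert_iff, Set.mem_singleton_iff]
  split_ifs <;> simp_all <;> norm_num

lemma leafA {a b c d d2 : Fin k}
    (hne : V a b c d ≠ V a b c d2)
    (hg : ¬ Bad (V a b c d) (V a b c d2)) : False := by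
  by_cases h : d = d2
  · exact hne (by rw [h])
  · exact hg ⟨1, -1, d2, d, d, Or.inl ⟨Ne.symm h, by simp only [V, P]; module⟩⟩

lemma leafB {a b c d d2 : Fin k} (had : a ≠ d) (had2 : a ≠ d2)
    (hg : ¬ Bad (V a b c d) (V a c b d2)) : False := by
  by_cases h : d = d2
  · subst h
    exact hg ⟨1, 1, a, d, d, Or.inr (Or.inl ⟨had, by simp only [V, P]; module⟩)⟩
  · exact hg ⟨-1, -1, d, a, d2,
      Or.inr (Or.inr ⟨Ne.symm had, had2, h, by simp only [V, P]; module⟩)⟩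

lemma leafC {a b c d b2 : Fin k} (hbd : b ≠ d) (hbb2 : b ≠ b2)
    (hg : ¬ Bad (V a b c d) (V a b2 b c)) : False := by
  by_cases h : d = b2
  · subst h
    exact hg ⟨1, -1, b, d, d, Or.inr (Or.inl ⟨hbd, by simp only [V, P]; module⟩)⟩
  · exact hg ⟨-1, 1, d, b, b2,
      Or.inr (Or.inr ⟨Ne.symm hbd, hbb2, h, by simp only [V, P]; module⟩)⟩

lemma main2 {a b c d b2 c2 d2 : Fin k}
    (hab : a ≠ b) (hac : a ≠ c) (had : a ≠ d) (hbc : b ≠ c) (hbd : b ≠ d) (hcd : c ≠ d)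
    (hab2 : a ≠ b2) (hac2 : a ≠ c2) (had2 : a ≠ d2)
    (hb2c2 : b2 ≠ c2) (hb2d2 : b2 ≠ d2) (hc2d2 : c2 ≠ d2)
    (hne : V a b c d ≠ V a b2 c2 d2)
    (hg : ¬ Bad (V a b c d) (V a b2 c2 d2))
    (hbm : b = b2 ∨ b = c2 ∨ b = d2)
    (hcm : c = b2 ∨ c = c2 ∨ c = d2) : False := by
  rcases hbm with h | h | h
  · subst h
    rcases hcm with h' | h' | h'
    · exact hbc h'.symm
    · subst h'
      exact leafA hne hg
    · subst h'
      have e : V a b c2 c = V a b c c2 := by simp only [V]; abel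
      rw [e] at hne hg
      exact leafA hne hg
  · subst h
    rcases hcm with h' | h' | h'
    · subst h'
      exact leafB had had2 hg
    · exact hbc h'.symm
    · subst h'
      exact leafC hbd (Ne.symm hb2c2) hg
  · subst h
    have e : V a b2 c2 b = V a b2 b c2 := by simp only [V]; abel
    rw [e] at hne hg
    rcases hcm with h' | h' | h'
    · subst h'
      exact leafB had hac2 hg
    · subst h'
      exact leafC hbd (Ne.symm hb2d2) hg
    · exact hbc h'.symm

lemma main3 {a b c d a2 b2 c2 d2 : Fin k}
    (hab : a ≠ b) (hac : a ≠ c) (had : a ≠ d) (hbc : b ≠ c) (hbd : b ≠ d) (hcd : c ≠ d)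
    (h2ab : a2 ≠ b2) (h2ac : a2 ≠ c2) (h2ad : a2 ≠ d2)
    (h2bc : b2 ≠ c2) (h2bd : b2 ≠ d2) (h2cd : c2 ≠ d2)
    (hne : V a b c d ≠ V a2 b2 c2 d2)
    (hne' : V a b c d ≠ -V a2 b2 c2 d2)
    (hg : ¬ Bad (V a b c d) (V a2 b2 c2 d2))
    (ham : a = a2 ∨ a = b2 ∨ a = c2 ∨ a = d2)
    (hbm : b = a2 ∨ b = b2 ∨ b = c2 ∨ b = d2)
    (hcm : c = a2 ∨ c = b2 ∨ c = c2 ∨ c = d2) : False := by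
  rcases ham with h | h | h | h
  · subst h
    have hb' : b = b2 ∨ b = c2 ∨ b = d2 := hbm.resolve_left (fun h => hab h.symm)
    have hc' : c = b2 ∨ c = c2 ∨ c = d2 := hcm.resolve_left (fun h => hac h.symm)
    exact main2 hab hac had hbc hbd hcd h2ab h2ac h2ad h2bc h2bd h2cd hne hg hb' hc'
  · subst h
    have e : V a2 a c2 d2 = V a a2 c2 d2 := by simp only [V]; abel
    rw [e] at hne hg
    have hb' : b = a2 ∨ b = c2 ∨ b = d2 := by
      rcases hbm with h | h | h | h
      exacts [Or.inl h, absurd h.symm hab, Or.inr (Or.inl h), Or.inr (Or.inr h)]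
    have hc' : c = a2 ∨ c = c2 ∨ c = d2 := by
      rcases hcm with h | h | h | h
      exacts [Or.inl h, absurd h.symm hac, Or.inr (Or.inl h), Or.inr (Or.inr h)]
    exact main2 hab hac had hbc hbd hcd (Ne.symm h2ab) h2bc h2bd h2ac h2ad h2cd hne hg hb' hc'
  · subst h
    have e : V a d2 a2 b2 = -V a2 b2 a d2 := by simp only [V]; abel
    have hneA : V a b c d ≠ V a d2 a2 b2 := by rw [e]; exact hne'
    have hgA : ¬ Bad (V a b c d) (V a d2 a2 b2) := by
      rw [e]; exact fun hh => hg (Bad_neg_right hh)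
    have hb' : b = d2 ∨ b = a2 ∨ b = b2 := by
      rcases hbm with h | h | h | h
      exacts [Or.inr (Or.inl h), Or.inr (Or.inr h), absurd h.symm hab, Or.inl h]
    have hc' : c = d2 ∨ c = a2 ∨ c = b2 := by
      rcases hcm with h | h | h | h
      exacts [Or.inr (Or.inl h), Or.inr (Or.inr h), absurd h.symm hac, Or.inl h]
    exact main2 hab hac had hbc hbd hcd h2cd (Ne.symm h2ac) (Ne.symm h2bc)
      (Ne.symm h2ad) (Ne.symm h2bd) h2ab hneA hgA hb' hc'
  · subst h
    have e : V a c2 a2 b2 = -V a2 b2 c2 a := by simp only [V]; abel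
    have hneA : V a b c d ≠ V a c2 a2 b2 := by rw [e]; exact hne'
    have hgA : ¬ Bad (V a b c d) (V a c2 a2 b2) := by
      rw [e]; exact fun hh => hg (Bad_neg_right hh)
    have hb' : b = c2 ∨ b = a2 ∨ b = b2 := by
      rcases hbm with h | h | h | h
      exacts [Or.inr (Or.inl h), Or.inr (Or.inr h), Or.inl h, absurd h.symm hab]
    have hc' : c = c2 ∨ c = a2 ∨ c = b2 := by
      rcases hcm with h | h | h | h
      exacts [Or.inr (Or.inl h), Or.inr (Or.inr h), Or.inl h, absurd h.symm hac]
    exact main2 hab hac had hbc hbd hcd (Ne.symm h2cd) (Ne.symm h2ad) (Ne.symm h2bd)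
      (Ne.symm h2ac) (Ne.symm h2bc) h2ab hneA hgA hb' hc'

lemma three_mem {a b c d t1 t2 t3 : Fin k} {S : Finset (Fin k)}
    (h1 : t1 = a ∨ t1 = b ∨ t1 = c ∨ t1 = d)
    (h2 : t2 = a ∨ t2 = b ∨ t2 = c ∨ t2 = d)
    (h3 : t3 = a ∨ t3 = b ∨ t3 = c ∨ t3 = d)
    (h12 : t1 ≠ t2) (h13 : t1 ≠ t3) (h23 : t2 ≠ t3)
    (m1 : t1 ∈ S) (m2 : t2 ∈ S) (m3 : t3 ∈ S) :
    (a ∈ S ∧ b ∈ S ∧ c ∈ S) ∨ (a ∈ S ∧ b ∈ S ∧ d ∈ S) ∨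
    (a ∈ S ∧ c ∈ S ∧ d ∈ S) ∨ (b ∈ S ∧ c ∈ S ∧ d ∈ S) := by
  rcases h1 with rfl | rfl | rfl | rfl <;> rcases h2 with rfl | rfl | rfl | rfl <;>
    rcases h3 with rfl | rfl | rfl | rfl <;> simp_all <;> tauto

end DiffAux

/-- If `(*₁)`, `(*₂)` are distinct difference equalities (distinct as equations, i.e.
neither equal nor opposite contents) such that the pair does not linearly imply any
equation of the form `x_i − x_j = 0`, `2x_i − 2x_j = 0` (`i ≠ j`), or
`x_i − 2x_j + x_m = 0` (`i, j, m` distinct), then `(*₁)` and `(*₂)` share at most two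
variables (a variable appears in an equation iff its coefficient is nonzero). -/
theorem diff_eqs_share_at_most_two_vars (k : ℕ) (v1 v2 : Fin k → ℝ)
    (h1 : IsDiffEq k v1) (h2 : IsDiffEq k v2) (hne : v1 ≠ v2) (hne' : v1 ≠ -v2)
    (hgood : ¬ ∃ (c1 c2 : ℝ) (i j m : Fin k),
      (i ≠ j ∧ c1 • v1 + c2 • v2 =
        (Pi.single i 1 : Fin k → ℝ) - (Pi.single j 1 : Fin k → ℝ)) ∨
      (i ≠ j ∧ c1 • v1 + c2 • v2 =
        (2 : ℝ) • ((Pi.single i 1 : Fin k → ℝ) - (Pi.single j 1 : Fin k → ℝ))) ∨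
      (i ≠ j ∧ j ≠ m ∧ i ≠ m ∧ c1 • v1 + c2 • v2 =
        (Pi.single i 1 : Fin k → ℝ) - (2 : ℝ) • (Pi.single j 1 : Fin k → ℝ)
          + (Pi.single m 1 : Fin k → ℝ))) :
    (Function.support v1 ∩ Function.support v2).ncard ≤ 2 := by
  open DiffAux in
  have hg : ¬ DiffAux.Bad v1 v2 := hgood
  have hb1 : ¬ DiffAux.Bad v1 0 := fun h => hg (DiffAux.Bad_zero_left h)
  have hb2 : ¬ DiffAux.Bad v2 0 := fun h => hg (DiffAux.Bad_zero_right h)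
  obtain ⟨a, b, c, d, hab, hac, had, hbc, hbd, hcd, rfl⟩ := DiffAux.nf h1 hb1
  obtain ⟨a2, b2, c2, d2, h2ab, h2ac, h2ad, h2bc, h2bd, h2cd, rfl⟩ := DiffAux.nf h2 hb2
  rw [DiffAux.supp_V hab hac had hbc hbd hcd,
    DiffAux.supp_V h2ab h2ac h2ad h2bc h2bd h2cd]
  by_contra hcard
  push_neg at hcard
  have hset : ({a, b, c, d} : Set (Fin k)) ∩ {a2, b2, c2, d2} =
      ↑((({a, b, c, d} : Finset (Fin k)) ∩ ({a2, b2, c2, d2} : Finset (Fin k)))) := by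
    simp
  rw [hset, Set.ncard_coe_finset, Finset.two_lt_card_iff] at hcard
  obtain ⟨t1, t2, t3, m1, m2, m3, h12, h13, h23⟩ := hcard
  rw [Finset.mem_inter] at m1 m2 m3
  have hd1 : ∀ x : Fin k, x ∈ ({a, b, c, d} : Finset (Fin k)) →
      (x = a ∨ x = b ∨ x = c ∨ x = d) := by intro x; simp
  have hd2 : ∀ x : Fin k, x ∈ ({a2, b2, c2, d2} : Finset (Fin k)) →
      (x = a2 ∨ x = b2 ∨ x = c2 ∨ x = d2) := by intro x; simp
  have key := DiffAux.three_mem (hd1 t1 m1.1) (hd1 t2 m2.1) (hd1 t3 m3.1)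
    h12 h13 h23 m1.2 m2.2 m3.2
  rcases key with ⟨Ha, Hb, Hc⟩ | ⟨Ha, Hb, Hd⟩ | ⟨Ha, Hc, Hd⟩ | ⟨Hb, Hc, Hd⟩
  · exact DiffAux.main3 hab hac had hbc hbd hcd h2ab h2ac h2ad h2bc h2bd h2cd hne hne' hg
      (hd2 a Ha) (hd2 b Hb) (hd2 c Hc)
  · have e : DiffAux.V a b d c = DiffAux.V a b c d := by simp only [DiffAux.V]; abel
    exact DiffAux.main3 hab had hac hbd hbc (Ne.symm hcd) h2ab h2ac h2ad h2bc h2bd h2cd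
      (by rw [e]; exact hne) (by rw [e]; exact hne') (by rw [e]; exact hg)
      (hd2 a Ha) (hd2 b Hb) (hd2 d Hd)
  · have e : DiffAux.V c d a b = -DiffAux.V a b c d := by simp only [DiffAux.V]; abel
    exact DiffAux.main3 hcd (Ne.symm hac) (Ne.symm hbc) (Ne.symm had) (Ne.symm hbd) hab
      h2ab h2ac h2ad h2bc h2bd h2cd
      (by rw [e]; exact fun h => hne' (neg_eq_iff_eq_neg.mp h))
      (by rw [e]; exact fun h => hne (neg_inj.mp h))
      (by rw [e]; exact fun h => hg (DiffAux.Bad_neg_left h))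
      (hd2 c Hc) (hd2 d Hd) (hd2 a Ha)
  · have e : DiffAux.V c d b a = -DiffAux.V a b c d := by simp only [DiffAux.V]; abel
    exact DiffAux.main3 hcd (Ne.symm hbc) (Ne.symm hac) (Ne.symm hbd) (Ne.symm had)
      (Ne.symm hab) h2ab h2ac h2ad h2bc h2bd h2cd
      (by rw [e]; exact fun h => hne' (neg_eq_iff_eq_neg.mp h))
      (by rw [e]; exact fun h => hne (neg_inj.mp h))
      (by rw [e]; exact fun h => hg (DiffAux.Bad_neg_left h))
      (hd2 c Hc) (hd2 d Hd) (hd2 b Hb)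
end

section
/- Let (*₁),…,(*_t) be linearly independent linear equations in x₁,…,x_k whose contents each involve at most 4 variables (with nonzero coefficients), and suppose they minimally imply a linear equation (*) whose content involves at most 4 variables. If the collection does not imply any equation of the form ε·x_i − ε·x_j = 0 with ε ≠ 0 and i ≠ j, then the total number of distinct variables appearing among (*₁),…,(*_t) is at most 2t + 2. -/
/-- Let `(*₁),…,(*_t)` have contents `v 1, …, v t` (vectors in `ℝ^k`), each involving at
most 4 variables, linearly independent, minimally implying an equation `(*)` with content
`w` involving at most 4 variables (so `w = ∑ εᵢ • v i` with all `εᵢ ≠ 0`). If the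
collection does not imply any equation of the form `ε·x_i − ε·x_j = 0` (`ε ≠ 0`,
`i ≠ j`), then at most `2t + 2` distinct variables appear among `(*₁),…,(*_t)`. -/
theorem min_implication_few_vars (k t : ℕ) (v : Fin t → Fin k → ℝ) (w : Fin k → ℝ)
    (hv4 : ∀ i, (Function.support (v i)).ncard ≤ 4)
    (hw4 : (Function.support w).ncard ≤ 4)
    (hli : LinearIndependent ℝ v)
    (ε : Fin t → ℝ) (hε : ∀ i, ε i ≠ 0) (hw : w = ∑ i, ε i • v i)
    (hvalid : ¬ ∃ (c : Fin t → ℝ) (e : ℝ) (i j : Fin k), e ≠ 0 ∧ i ≠ j ∧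
      ∑ i', c i' • v i' =
        e • ((Pi.single i 1 : Fin k → ℝ) - (Pi.single j 1 : Fin k → ℝ))) :
    (⋃ i, Function.support (v i)).ncard ≤ 2 * t + 2 := by
  classical
  -- the set of variables appearing, as a Finset
  set A : Finset (Fin k) := Finset.univ.filter (fun x => ∃ i, v i x ≠ 0) with hA
  have hS : (⋃ i, Function.support (v i)) = ↑A := by
    ext x
    simp [hA, Function.mem_support]
  rw [hS, Set.ncard_coe_finset]
  -- count of equations containing variable x
  set cnt : Fin k → ℕ := fun x => (Finset.univ.filter fun i => v i x ≠ 0).card with hcnt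
  -- pointwise value of w
  have hwx : ∀ x, w x = ∑ i, ε i * v i x := by
    intro x
    rw [hw]
    simp [Finset.sum_apply]
  -- key pointwise bound
  have key : ∀ x ∈ A, 2 ≤ cnt x + (if w x ≠ 0 then 1 else 0) := by
    intro x hx
    rw [hA, Finset.mem_filter] at hx
    obtain ⟨-, i₀, hi₀⟩ := hx
    have hi₀mem : i₀ ∈ Finset.univ.filter fun i => v i x ≠ 0 := by
      simp [hi₀]
    by_cases hwx0 : w x ≠ 0
    · have h1 : 1 ≤ cnt x := Finset.card_pos.mpr ⟨i₀, hi₀mem⟩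
      rw [if_pos hwx0]
      omega
    · -- w x = 0 : need cnt x ≥ 2
      push_neg at hwx0
      by_contra hlt
      push_neg at hlt
      simp only [hwx0, ne_eq, not_true_eq_false, if_false] at hlt
      have h1 : 1 ≤ cnt x := Finset.card_pos.mpr ⟨i₀, hi₀mem⟩
      have hc1 : cnt x = 1 := by omega
      obtain ⟨a, ha⟩ := Finset.card_eq_one.mp hc1
      have hai : i₀ = a := by
        have := hi₀mem
        rw [hcnt] at hc1
        rw [ha] at this
        simpa using this
      subst hai
      have : w x = ε i₀ * v i₀ x := by
        rw [hwx x]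
        apply Finset.sum_eq_single i₀
        · intro b _ hb
          have hbns : b ∉ (Finset.univ.filter fun i => v i x ≠ 0) := by
            rw [ha]
            simpa using hb
          have : ¬ v b x ≠ 0 := by
            intro h
            exact hbns (by simp [h])
          push_neg at this
          rw [this, mul_zero]
        · intro h
          exact absurd (Finset.mem_univ i₀) h
      rw [hwx0] at this
      exact (mul_ne_zero (hε i₀) hi₀) this.symm
  -- total count
  have swap : ∑ x : Fin k, cnt x = ∑ i : Fin t, (Finset.univ.filter fun x => v i x ≠ 0).card := by
    simp_rw [hcnt, Finset.card_filter]
    exact Finset.sum_comm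
  have hsupp : ∀ i, (Finset.univ.filter fun x => v i x ≠ 0).card ≤ 4 := by
    intro i
    have : Function.support (v i) = ↑(Finset.univ.filter fun x => v i x ≠ 0) := by
      ext x; simp [Function.mem_support]
    have h := hv4 i
    rwa [this, Set.ncard_coe_finset] at h
  have htot : ∑ x : Fin k, cnt x ≤ 4 * t := by
    rw [swap]
    calc ∑ i : Fin t, (Finset.univ.filter fun x => v i x ≠ 0).card
        ≤ ∑ _i : Fin t, 4 := Finset.sum_le_sum (fun i _ => hsupp i)
      _ = 4 * t := by simp [mul_comm]
  have hwind : ∑ x : Fin k, (if w x ≠ 0 then 1 else 0) ≤ 4 := by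
    have : (∑ x : Fin k, if w x ≠ 0 then 1 else 0)
        = (Finset.univ.filter fun x => w x ≠ 0).card := by
      rw [Finset.card_filter]
    rw [this]
    have hsw : Function.support w = ↑(Finset.univ.filter fun x => w x ≠ 0) := by
      ext x; simp [Function.mem_support]
    rwa [hsw, Set.ncard_coe_finset] at hw4
  have main : 2 * A.card ≤ 4 * t + 4 := by
    calc 2 * A.card = ∑ _x ∈ A, 2 := by rw [Finset.sum_const, smul_eq_mul, mul_comm]
      _ ≤ ∑ x ∈ A, (cnt x + (if w x ≠ 0 then 1 else 0)) := Finset.sum_le_sum key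
      _ = ∑ x ∈ A, cnt x + ∑ x ∈ A, (if w x ≠ 0 then 1 else 0) := Finset.sum_add_distrib
      _ ≤ ∑ x : Fin k, cnt x + ∑ x : Fin k, (if w x ≠ 0 then 1 else 0) := by
          gcongr <;> exact Finset.subset_univ A
      _ ≤ 4 * t + 4 := add_le_add htot hwind
  omega
end
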